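/- arXiv:1806.01325 — 7 statements merged into one kernel-verified Lean document; each statement's English description precedes it below -/
import Mathlib

section
/- Let Z be a standard Gaussian random variable and q > 0. For every μ ≤ 0, P(Z + μ > √q | Z + μ ≥ 0) ≤ P(Z > √q | Z ≥ 0). -/
/-! Write `T x = ∫_x^∞ φ` for the standard Gaussian tail. The two conditional probabilities are
`T (-μ + √q) / T (-μ)` and `T √q / T 0`, so it suffices that `u ↦ T (u + s) / T u` is antitone for
`s ≥ 0`, which holds because `T` is log-concave. Log-concavity means that `(log T)' = -φ / T` is
antitone; its derivative is `φ (x T x - φ x) / T x ^ 2`, and `x T x ≤ ∫_x^∞ t φ t dt = φ x`. -/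

open MeasureTheory ProbabilityTheory Set

theorem hasDerivAt_integral_Ioi {f : ℝ → ℝ} (hf : Integrable f) {x : ℝ} (hx : ContinuousAt f x) :
    HasDerivAt (fun y => ∫ t in Ioi y, f t) (-f x) x := by
  have h : (fun y => ∫ t in Ioi y, f t) = fun y => (∫ t in Ioi 0, f t) - ∫ t in 0..y, f t := by
    funext y
    rw [← intervalIntegral.integral_Ioi_sub_Ioi' hf.integrableOn hf.integrableOn]
    ring
  rw [h]
  exact (intervalIntegral.integral_hasDerivAt_right hf.intervalIntegrable
    hf.aestronglyMeasurable.stronglyMeasurableAtFilter hx).const_sub _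

theorem antitone_div_comp_add_of_antitone_logDeriv {F : ℝ → ℝ} (hF : Differentiable ℝ F)
    (hpos : ∀ x, 0 < F x) (hlog : Antitone (logDeriv F)) {s : ℝ} (hs : 0 ≤ s) :
    Antitone fun u => F (u + s) / F u := by
  have hderiv (u : ℝ) : HasDerivAt (fun u => F (u + s) / F u)
      ((deriv F (u + s) * F u - F (u + s) * deriv F u) / F u ^ 2) u :=
    ((hF (u + s)).hasDerivAt.comp_add_const u s).div (hF u).hasDerivAt (hpos u).ne'
  refine antitone_of_deriv_nonpos (fun u => (hderiv u).differentiableAt) fun u => ?_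
  have h := hlog (le_add_of_nonneg_right hs : u ≤ u + s)
  rw [logDeriv_apply, logDeriv_apply, div_le_div_iff₀ (hpos _) (hpos _)] at h
  rw [(hderiv u).deriv]
  exact div_nonpos_of_nonpos_of_nonneg (by linarith) (sq_nonneg _)

theorem hasDerivAt_gaussianPDFReal (μ : ℝ) (v : NNReal) (x : ℝ) :
    HasDerivAt (gaussianPDFReal μ v) (-(x - μ) / v * gaussianPDFReal μ v x) x := by
  have hsq := (((hasDerivAt_id' x).sub_const μ).fun_pow 2).fun_neg.div_const (2 * (v : ℝ))
  refine (hsq.exp.const_mul (√(2 * Real.pi * v))⁻¹).congr_deriv ?_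
  rw [gaussianPDFReal]
  ring

theorem integrable_mul_gaussianPDFReal : Integrable fun t => t * gaussianPDFReal 0 1 t := by
  refine ((integrable_mul_exp_neg_mul_sq (b := 1 / 2) (by norm_num)).const_mul
    (√(2 * Real.pi))⁻¹).congr (ae_of_all _ fun t => ?_)
  simp only [gaussianPDFReal, NNReal.coe_one, mul_one, sub_zero]
  ring_nf

theorem integral_Ioi_mul_gaussianPDFReal (x : ℝ) :
    ∫ t in Ioi x, t * gaussianPDFReal 0 1 t = gaussianPDFReal 0 1 x := by
  have hderiv (t : ℝ) :
      HasDerivAt (fun t => -gaussianPDFReal 0 1 t) (t * gaussianPDFReal 0 1 t) t :=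
    (hasDerivAt_gaussianPDFReal 0 1 t).neg.congr_deriv (by simp)
  have hlim := tendsto_zero_of_hasDerivAt_of_integrableOn_Ioi (a := x) (fun t _ => hderiv t)
    integrable_mul_gaussianPDFReal.integrableOn (integrable_gaussianPDFReal 0 1).neg.integrableOn
  simpa using integral_Ioi_of_hasDerivAt_of_tendsto' (fun t _ => hderiv t)
    integrable_mul_gaussianPDFReal.integrableOn hlim

noncomputable def gaussianTail (x : ℝ) : ℝ :=
  ∫ t in Ioi x, gaussianPDFReal 0 1 t

theorem gaussianTail_pos (x : ℝ) : 0 < gaussianTail x := by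
  rw [gaussianTail, setIntegral_pos_iff_support_of_nonneg_ae
    (ae_of_all _ (gaussianPDFReal_nonneg 0 1)) (integrable_gaussianPDFReal 0 1).integrableOn]
  have hsupp : Function.support (gaussianPDFReal 0 1) = univ :=
    Function.support_eq_univ fun t => (gaussianPDFReal_pos 0 1 t one_ne_zero).ne'
  simp [hsupp]

theorem hasDerivAt_gaussianTail (x : ℝ) :
    HasDerivAt gaussianTail (-gaussianPDFReal 0 1 x) x :=
  hasDerivAt_integral_Ioi (integrable_gaussianPDFReal 0 1)
    (hasDerivAt_gaussianPDFReal 0 1 x).continuousAt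

theorem mul_gaussianTail_le (x : ℝ) : x * gaussianTail x ≤ gaussianPDFReal 0 1 x :=
  calc x * gaussianTail x = ∫ t in Ioi x, x * gaussianPDFReal 0 1 t := by
        rw [gaussianTail, integral_const_mul]
    _ ≤ ∫ t in Ioi x, t * gaussianPDFReal 0 1 t :=
        setIntegral_mono_on ((integrable_gaussianPDFReal 0 1).integrableOn.const_mul x)
          integrable_mul_gaussianPDFReal.integrableOn measurableSet_Ioi fun t ht =>
            mul_le_mul_of_nonneg_right (le_of_lt ht) (gaussianPDFReal_nonneg 0 1 t)
    _ = gaussianPDFReal 0 1 x := integral_Ioi_mul_gaussianPDFReal x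

theorem antitone_logDeriv_gaussianTail : Antitone (logDeriv gaussianTail) := by
  have hlog : logDeriv gaussianTail = -gaussianPDFReal 0 1 / gaussianTail := by
    funext x
    rw [logDeriv_apply, (hasDerivAt_gaussianTail x).deriv, Pi.div_apply, Pi.neg_apply]
  have hderiv (x : ℝ) := (hasDerivAt_gaussianPDFReal 0 1 x).neg.div (hasDerivAt_gaussianTail x)
    (gaussianTail_pos x).ne'
  rw [hlog]
  refine antitone_of_deriv_nonpos (fun x => (hderiv x).differentiableAt) fun x => ?_
  rw [(hderiv x).deriv]
  refine div_nonpos_of_nonpos_of_nonneg ?_ (sq_nonneg _)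
  calc _ = gaussianPDFReal 0 1 x * (x * gaussianTail x - gaussianPDFReal 0 1 x) := by
        simp only [Pi.neg_apply, NNReal.coe_one, div_one, sub_zero]; ring
    _ ≤ 0 := mul_nonpos_of_nonneg_of_nonpos (gaussianPDFReal_nonneg 0 1 x)
        (sub_nonpos.mpr (mul_gaussianTail_le x))

theorem gaussianReal_Ioi (x : ℝ) : gaussianReal 0 1 (Ioi x) = ENNReal.ofReal (gaussianTail x) :=
  gaussianReal_apply_eq_integral 0 one_ne_zero _

theorem gaussianReal_Ici (x : ℝ) : gaussianReal 0 1 (Ici x) = ENNReal.ofReal (gaussianTail x) := by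
  rw [gaussianReal_apply_eq_integral 0 one_ne_zero, integral_Ici_eq_integral_Ioi, gaussianTail]

theorem stmt0_general (q μ : ℝ) (hμ : μ ≤ 0) :
    (gaussianReal 0 1) {z : ℝ | z + μ > Real.sqrt q ∧ z + μ ≥ 0} /
      (gaussianReal 0 1) {z : ℝ | z + μ ≥ 0} ≤
    (gaussianReal 0 1) {z : ℝ | z > Real.sqrt q ∧ z ≥ 0} /
      (gaussianReal 0 1) {z : ℝ | z ≥ 0} := by
  have hnum (c : ℝ) : {z : ℝ | z + c > √q ∧ z + c ≥ 0} = Ioi (-c + √q) := by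
    ext z
    simp only [Set.mem_ofPred_eq, mem_Ioi]
    constructor
    · rintro ⟨h, -⟩; linarith
    · intro h; constructor <;> linarith [Real.sqrt_nonneg q]
  have hden (c : ℝ) : {z : ℝ | z + c ≥ 0} = Ici (-c) := by
    ext z
    simp only [Set.mem_ofPred_eq, mem_Ici]
    constructor <;> intro h <;> linarith
  have hratio := antitone_div_comp_add_of_antitone_logDeriv
    (fun x => (hasDerivAt_gaussianTail x).differentiableAt) gaussianTail_pos
    antitone_logDeriv_gaussianTail (Real.sqrt_nonneg q) (neg_nonneg.mpr hμ)
  rw [hnum, hden, show {z : ℝ | z > √q ∧ z ≥ 0} = Ioi (-0 + √q) by simpa using hnum 0,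
    show {z : ℝ | z ≥ 0} = Ici (-0) by simpa using hden 0]
  simp only [gaussianReal_Ioi, gaussianReal_Ici, neg_zero,
    ← ENNReal.ofReal_div_of_pos (gaussianTail_pos _)]
  exact ENNReal.ofReal_le_ofReal hratio

/-- For Z standard Gaussian, q > 0, μ ≤ 0,
P(Z + μ > √q | Z + μ ≥ 0) ≤ P(Z > √q | Z ≥ 0). -/
theorem stmt0 (q μ : ℝ) (hq : 0 < q) (hμ : μ ≤ 0) :
    (gaussianReal 0 1) {z : ℝ | z + μ > Real.sqrt q ∧ z + μ ≥ 0} /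
      (gaussianReal 0 1) {z : ℝ | z + μ ≥ 0} ≤
    (gaussianReal 0 1) {z : ℝ | z > Real.sqrt q ∧ z ≥ 0} /
      (gaussianReal 0 1) {z : ℝ | z ≥ 0} :=
  stmt0_general q μ hμ
end

section
/- The function f(x) = (1 - Φ(-x + c)) / (1 - Φ(-x)) is increasing in x on ℝ, for any fixed c > 0, where Φ is the standard normal CDF. -/
open MeasureTheory ProbabilityTheory

/-- The standard normal CDF. -/
noncomputable def stdNormalCDF (x : ℝ) : ℝ :=
  ((gaussianReal 0 1) (Set.Iic x)).toReal

/-!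
Writing `φ` for the standard normal density, the symmetry `1 - Φ(-x) = Φ(x)` turns the function
into `x ↦ Φ(x - c) / Φ(x)`. Its derivative has the sign of `φ(x - c) / Φ(x - c) - φ(x) / Φ(x)`,
so it suffices that `φ / Φ` is strictly decreasing. Since `φ' = -x φ`, the derivative of `φ / Φ`
has the sign of `-φ (x Φ + φ)`, and `x Φ(x) + φ(x) = ∫_{t ≤ x} (x - t) φ(t) dt > 0`.
-/

open Set

theorem strictMono_div_comp_sub_of_strictAnti {F p : ℝ → ℝ} (hF : ∀ x, 0 < F x)
    (hderiv : ∀ x, HasDerivAt F (p x) x) (hanti : StrictAnti fun x => p x / F x)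
    {c : ℝ} (hc : 0 < c) : StrictMono fun x => F (x - c) / F x := by
  refine strictMono_of_deriv_pos fun x => ?_
  rw [((HasDerivAt.comp_sub_const x c (hderiv (x - c))).fun_div (hderiv x) (hF x).ne').deriv]
  have hlt : p x / F x < p (x - c) / F (x - c) := hanti (by linarith)
  rw [div_lt_div_iff₀ (hF x) (hF (x - c))] at hlt
  exact div_pos (by linarith) (pow_pos (hF x) 2)

theorem setIntegral_Iic_pos_of_pos {f : ℝ → ℝ} {a : ℝ} (hf : IntegrableOn f (Iic a))
    (hpos : ∀ t < a, 0 < f t) : 0 < ∫ t in Iic a, f t := by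
  have hsupp : Function.support f ∩ Iio a = Iio a := inter_eq_right.2 fun t ht => (hpos t ht).ne'
  rw [integral_Iic_eq_integral_Iio, setIntegral_pos_iff_support_of_nonneg_ae
    ((ae_restrict_iff' measurableSet_Iio).2 (ae_of_all _ fun t ht => (hpos t ht).le))
    (hf.mono_set Iio_subset_Iic_self), hsupp]
  simp

namespace ProbabilityTheory

theorem hasDerivAt_gaussianPDFReal (μ : ℝ) (v : NNReal) (x : ℝ) :
    HasDerivAt (gaussianPDFReal μ v) (-(x - μ) / v * gaussianPDFReal μ v x) x := by
  have hexp : HasDerivAt (fun y => -(y - μ) ^ 2 / (2 * v)) (-(x - μ) / v) x := by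
    refine ((((hasDerivAt_id x).sub_const μ).pow 2).neg.div_const (2 * (v : ℝ))).congr_deriv ?_
    simp only [id, Nat.cast_ofNat, mul_one, Nat.add_one_sub_one, pow_one]
    rw [← mul_neg, mul_div_mul_left _ _ two_ne_zero]
  rw [gaussianPDFReal_def]
  exact (hexp.exp.const_mul _).congr_deriv (by ring)

theorem continuous_gaussianPDFReal (μ : ℝ) (v : NNReal) : Continuous (gaussianPDFReal μ v) := by
  rw [gaussianPDFReal_def]
  fun_prop

local notation "φ" => gaussianPDFReal 0 1

theorem hasDerivAt_gaussianPDFReal_zero_one (x : ℝ) : HasDerivAt φ (-x * φ x) x := by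
  simpa using hasDerivAt_gaussianPDFReal 0 1 x

theorem integrable_neg_mul_gaussianPDFReal_zero_one : Integrable fun t => -t * φ t := by
  refine ((integrable_mul_exp_neg_mul_sq (b := 1 / 2) (by norm_num)).const_mul
    (-(√(2 * Real.pi))⁻¹)).congr (ae_of_all _ fun t => ?_)
  simp only [gaussianPDFReal_def, NNReal.coe_one, mul_one, sub_zero]
  ring_nf

theorem integral_Iic_neg_mul_gaussianPDFReal_zero_one (x : ℝ) :
    ∫ t in Iic x, -t * φ t = φ x := by
  have hderiv : ∀ t ∈ Iic x, HasDerivAt φ (-t * φ t) t :=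
    fun t _ => hasDerivAt_gaussianPDFReal_zero_one t
  have hint : IntegrableOn (fun t => -t * φ t) (Iic x) :=
    integrable_neg_mul_gaussianPDFReal_zero_one.integrableOn
  rw [integral_Iic_of_hasDerivAt_of_tendsto' hderiv hint
    (tendsto_zero_of_hasDerivAt_of_integrableOn_Iic hderiv hint
      (integrable_gaussianPDFReal 0 1).integrableOn), sub_zero]

theorem stdNormalCDF_eq_integral (x : ℝ) : stdNormalCDF x = ∫ t in Iic x, φ t := by
  rw [stdNormalCDF, gaussianReal_apply_eq_integral 0 one_ne_zero,
    ENNReal.toReal_ofReal (integral_nonneg fun t => gaussianPDFReal_nonneg 0 1 t)]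

theorem stdNormalCDF_pos (x : ℝ) : 0 < stdNormalCDF x := by
  rw [stdNormalCDF_eq_integral]
  exact setIntegral_Iic_pos_of_pos (integrable_gaussianPDFReal 0 1).integrableOn
    fun t _ => gaussianPDFReal_pos 0 1 t one_ne_zero

theorem one_sub_stdNormalCDF_neg (x : ℝ) : 1 - stdNormalCDF (-x) = stdNormalCDF x := by
  have := nullSingletonClass_gaussianReal (μ := 0) (v := 1) one_ne_zero
  have hsymm : (gaussianReal 0 1).map (fun t => -t) = gaussianReal 0 1 := by
    simpa using gaussianReal_map_neg (μ := 0) (v := 1)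
  calc 1 - stdNormalCDF (-x) = (gaussianReal 0 1).real (Iic (-x))ᶜ :=
        (probReal_compl_eq_one_sub measurableSet_Iic).symm
    _ = ((gaussianReal 0 1).map (fun t => -t)).real (Iio x) := by
        rw [map_measureReal_apply measurable_neg measurableSet_Iio, compl_Iic, neg_preimage,
          neg_Iio]
    _ = stdNormalCDF x := by
        rw [hsymm, measureReal_congr Iio_ae_eq_Iic]; rfl

theorem hasDerivAt_stdNormalCDF (x : ℝ) : HasDerivAt stdNormalCDF (φ x) x := by
  have hint : ∀ a : ℝ, IntegrableOn φ (Iic a) :=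
    fun _ => (integrable_gaussianPDFReal 0 1).integrableOn
  have hcdf : (fun y => stdNormalCDF 0 + ∫ t in (0 : ℝ)..y, φ t) = stdNormalCDF := by
    ext y
    rw [stdNormalCDF_eq_integral, stdNormalCDF_eq_integral,
      ← intervalIntegral.integral_Iic_sub_Iic (hint 0) (hint y), add_sub_cancel]
  rw [← hcdf]
  have hcont := continuous_gaussianPDFReal 0 1
  exact (intervalIntegral.integral_hasDerivAt_right
    (integrable_gaussianPDFReal 0 1).intervalIntegrable
    hcont.stronglyMeasurable.stronglyMeasurableAtFilter hcont.continuousAt).const_add _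

theorem integral_Iic_sub_mul_gaussianPDFReal_zero_one (x : ℝ) :
    ∫ t in Iic x, (x - t) * φ t = x * stdNormalCDF x + φ x := by
  have hsplit : (fun t => (x - t) * φ t) = fun t => x * φ t + -t * φ t := by ext t; ring
  rw [hsplit, integral_add ((integrable_gaussianPDFReal 0 1).integrableOn.const_mul x)
    integrable_neg_mul_gaussianPDFReal_zero_one.integrableOn,
    integral_const_mul, integral_Iic_neg_mul_gaussianPDFReal_zero_one, stdNormalCDF_eq_integral]

theorem mul_stdNormalCDF_add_gaussianPDFReal_pos (x : ℝ) : 0 < x * stdNormalCDF x + φ x := by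
  rw [← integral_Iic_sub_mul_gaussianPDFReal_zero_one]
  have hint : Integrable fun t => (x - t) * φ t :=
    (((integrable_gaussianPDFReal 0 1).const_mul x).add
      integrable_neg_mul_gaussianPDFReal_zero_one).congr
      (ae_of_all _ fun t => by simp only [Pi.add_apply]; ring)
  exact setIntegral_Iic_pos_of_pos hint.integrableOn
    fun t ht => mul_pos (sub_pos.2 ht) (gaussianPDFReal_pos 0 1 t one_ne_zero)

theorem strictAnti_gaussianPDFReal_div_stdNormalCDF :
    StrictAnti fun x => φ x / stdNormalCDF x := by
  refine strictAnti_of_deriv_neg fun x => ?_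
  rw [((hasDerivAt_gaussianPDFReal_zero_one x).fun_div (hasDerivAt_stdNormalCDF x)
    (stdNormalCDF_pos x).ne').deriv]
  refine div_neg_of_neg_of_pos ?_ (pow_pos (stdNormalCDF_pos x) 2)
  calc -x * φ x * stdNormalCDF x - φ x * φ x = -(φ x * (x * stdNormalCDF x + φ x)) := by ring
    _ < 0 := neg_neg_of_pos (mul_pos (gaussianPDFReal_pos 0 1 x one_ne_zero)
        (mul_stdNormalCDF_add_gaussianPDFReal_pos x))

end ProbabilityTheory

/-- x ↦ (1 - Φ(-x + c)) / (1 - Φ(-x)) is increasing, for c > 0. -/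
theorem stmt1 (c : ℝ) (hc : 0 < c) :
    StrictMono (fun x : ℝ => (1 - stdNormalCDF (-x + c)) / (1 - stdNormalCDF (-x))) := by
  have hsymm : (fun x : ℝ => (1 - stdNormalCDF (-x + c)) / (1 - stdNormalCDF (-x)))
      = fun x => stdNormalCDF (x - c) / stdNormalCDF x := by
    ext x
    rw [show -x + c = -(x - c) by ring, one_sub_stdNormalCDF_neg, one_sub_stdNormalCDF_neg]
  rw [hsymm]
  exact strictMono_div_comp_sub_of_strictAnti stdNormalCDF_pos hasDerivAt_stdNormalCDF
    strictAnti_gaussianPDFReal_div_stdNormalCDF hc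
end

section
/- Let Y = (Y₁, Y₂) with Y₁, Y₂ independent N(μᵢ, 1) and μ₁ ≤ 0, μ₂ ≤ 0. Let q₂ be the (1-α)-quantile of χ²(2). Then P(Y₁² + Y₂² > q₂ | Y₁ ≥ 0, Y₂ ≥ 0) ≤ α. -/
/-!
Write `P` for the law of `(Y₁, Y₂)`, `G` for the standard Gaussian law on `ℝ²` and `Q` for the
closed positive quadrant. The density of `N(m, v)` with respect to `N(0, v)` is
`x ↦ exp ((m x - m² / 2) / v)`, which is antitone when `m ≤ 0`. Conditioned on `Q`, the event
`{Y₁² + Y₂² > q₂}` is an upper set, so by the Harris inequality for product measures it is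
negatively correlated with the product density: `P(· | Q) ≤ G(· | Q)` on it. Since `G` is
invariant under both sign flips, `G(· | Q)` of this radial event equals its unconditional
`G`-probability, which is `P(χ²(2) > q₂) = α`.
-/

open MeasureTheory ProbabilityTheory

/-- The chi-squared distribution with `k` degrees of freedom, as the law of the
sum of squares of `k` independent standard Gaussians. -/
noncomputable def chiSq (k : ℕ) : Measure ℝ :=
  Measure.map (fun x : Fin k → ℝ => ∑ i, (x i) ^ 2)
    (Measure.pi fun _ : Fin k => gaussianReal 0 1)

open Set
open scoped ENNReal NNReal

theorem ENNReal.mul_add_mul_le_mul_add_mul {a b c d : ℝ≥0∞} (hab : a ≤ b) (hcd : c ≤ d) :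
    a * d + b * c ≤ a * c + b * d := by
  obtain ⟨e, rfl⟩ := exists_add_of_le hcd
  calc a * (c + e) + b * c = a * c + (a * e + b * c) := by ring
    _ ≤ a * c + (b * e + b * c) := by gcongr
    _ = a * c + b * (c + e) := by ring

theorem IsUpperSet.monotone_indicator_one {α : Type*} [Preorder α] {S : Set α}
    (hS : IsUpperSet S) : Monotone (S.indicator (1 : α → ℝ≥0∞)) := by
  intro p r h
  by_cases hp : p ∈ S
  · simp [hp, hS h hp]
  · simp [hp]

section Harris

variable {α β : Type*} [LinearOrder α] [MeasurableSpace α] [LinearOrder β] [MeasurableSpace β]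

theorem Monotone.measure_univ_mul_lintegral_mul_le {ν : Measure α} {f g : α → ℝ≥0∞}
    (hf : Monotone f) (hg : Antitone g) (hfm : Measurable f) (hgm : Measurable g) :
    ν univ * ∫⁻ x, f x * g x ∂ν ≤ (∫⁻ x, f x ∂ν) * ∫⁻ x, g x ∂ν := by
  have pointwise (x y : α) : f x * g x + f y * g y ≤ f x * g y + f y * g x := by
    rcases le_total x y with h | h
    · exact ENNReal.mul_add_mul_le_mul_add_mul (hf h) (hg h)
    · rw [add_comm (f x * g x), add_comm (f x * g y)]
      exact ENNReal.mul_add_mul_le_mul_add_mul (hf h) (hg h)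
  have hfg : Measurable fun x => f x * g x := hfm.mul hgm
  rw [← ENNReal.mul_le_mul_iff_right (a := 2) (by norm_num) (by norm_num)]
  calc 2 * (ν univ * ∫⁻ x, f x * g x ∂ν)
      = ∫⁻ x, ∫⁻ y, (f x * g x + f y * g y) ∂ν ∂ν := by
        simp_rw [lintegral_add_right _ hfg, lintegral_const]
        rw [lintegral_add_right _ measurable_const, lintegral_mul_const _ hfg, lintegral_const]
        ring
    _ ≤ ∫⁻ x, ∫⁻ y, (f x * g y + f y * g x) ∂ν ∂ν :=
        lintegral_mono fun x => lintegral_mono fun y => pointwise x y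
    _ = 2 * ((∫⁻ x, f x ∂ν) * ∫⁻ x, g x ∂ν) := by
        simp_rw [lintegral_add_left (hgm.const_mul _), lintegral_const_mul _ hgm,
          lintegral_mul_const _ hfm]
        rw [lintegral_add_right _ (hgm.const_mul _), lintegral_mul_const _ hfm,
          lintegral_const_mul _ hgm]
        ring

theorem Monotone.measure_univ_mul_lintegral_prod_mul_le {ν₁ : Measure α} {ν₂ : Measure β}
    [SFinite ν₁] [SFinite ν₂] {F G : α × β → ℝ≥0∞}
    (hF : Monotone F) (hG : Antitone G) (hFm : Measurable F) (hGm : Measurable G) :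
    ν₁ univ * ν₂ univ * ∫⁻ p, F p * G p ∂(ν₁.prod ν₂)
      ≤ (∫⁻ p, F p ∂(ν₁.prod ν₂)) * ∫⁻ p, G p ∂(ν₁.prod ν₂) := by
  set Φ := fun x => ∫⁻ y, F (x, y) ∂ν₂
  set Ψ := fun x => ∫⁻ y, G (x, y) ∂ν₂
  have hΦ : Monotone Φ := fun _ _ h => lintegral_mono fun _ => hF (Prod.mk_le_mk.2 ⟨h, le_rfl⟩)
  have hΨ : Antitone Ψ := fun _ _ h => lintegral_mono fun _ => hG (Prod.mk_le_mk.2 ⟨h, le_rfl⟩)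
  have inner (x : α) : ν₂ univ * ∫⁻ y, F (x, y) * G (x, y) ∂ν₂ ≤ Φ x * Ψ x :=
    Monotone.measure_univ_mul_lintegral_mul_le (fun _ _ h => hF (Prod.mk_le_mk.2 ⟨le_rfl, h⟩))
      (fun _ _ h => hG (Prod.mk_le_mk.2 ⟨le_rfl, h⟩))
      (hFm.comp measurable_prodMk_left) (hGm.comp measurable_prodMk_left)
  calc ν₁ univ * ν₂ univ * ∫⁻ p, F p * G p ∂(ν₁.prod ν₂)
      = ν₁ univ * ∫⁻ x, ν₂ univ * ∫⁻ y, F (x, y) * G (x, y) ∂ν₂ ∂ν₁ := by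
        rw [lintegral_prod (fun p => F p * G p) (hFm.mul hGm).aemeasurable, mul_assoc,
          ← lintegral_const_mul (f := fun x => ∫⁻ y, F (x, y) * G (x, y) ∂ν₂) _
            (hFm.mul hGm).lintegral_prod_right']
    _ ≤ ν₁ univ * ∫⁻ x, Φ x * Ψ x ∂ν₁ := by gcongr ν₁ univ * ?_; exact lintegral_mono inner
    _ ≤ (∫⁻ x, Φ x ∂ν₁) * ∫⁻ x, Ψ x ∂ν₁ :=
        hΦ.measure_univ_mul_lintegral_mul_le hΨ hFm.lintegral_prod_right' hGm.lintegral_prod_right'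
    _ = _ := by rw [lintegral_prod _ hFm.aemeasurable, lintegral_prod _ hGm.aemeasurable]

end Harris

section Symmetry

variable {ν : Measure ℝ} [ν.IsNegInvariant] [NullSingletonClass ν]

theorem lintegral_eq_two_mul_setLIntegral_Ici_of_even {f : ℝ → ℝ≥0∞} (hf : ∀ x, f (-x) = f x) :
    ∫⁻ x, f x ∂ν = 2 * ∫⁻ x in Ici 0, f x ∂ν := by
  have hneg : ∫⁻ x in Iio 0, f x ∂ν = ∫⁻ x in Ici 0, f x ∂ν := by
    calc ∫⁻ x in Iio 0, f x ∂ν = ∫⁻ x in Neg.neg ⁻¹' Ioi 0, f (-x) ∂ν := by simp [hf]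
      _ = ∫⁻ x in Ioi 0, f x ∂ν := (Measure.measurePreserving_neg ν).setLIntegral_comp_preimage_emb
          (Homeomorph.neg ℝ).measurableEmbedding f _
      _ = ∫⁻ x in Ici 0, f x ∂ν := setLIntegral_congr Ioi_ae_eq_Ici
  rw [← lintegral_add_compl f measurableSet_Ici, compl_Ici, hneg, two_mul]

theorem lintegral_prod_eq_four_mul_setLIntegral_quadrant [SFinite ν] {f : ℝ × ℝ → ℝ≥0∞}
    (hfm : Measurable f) (hf₁ : ∀ x y, f (-x, y) = f (x, y)) (hf₂ : ∀ x y, f (x, -y) = f (x, y)) :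
    ∫⁻ p, f p ∂(ν.prod ν) = 4 * ∫⁻ p in Ici 0 ×ˢ Ici 0, f p ∂(ν.prod ν) := by
  have inner (x : ℝ) : ∫⁻ y, f (x, y) ∂ν = 2 * ∫⁻ y in Ici 0, f (x, y) ∂ν :=
    lintegral_eq_two_mul_setLIntegral_Ici_of_even (hf₂ x)
  rw [← Measure.prod_restrict, lintegral_prod _ hfm.aemeasurable,
    lintegral_prod _ hfm.aemeasurable,
    lintegral_eq_two_mul_setLIntegral_Ici_of_even fun x => by simp only [hf₁]]
  simp_rw [inner]
  rw [lintegral_const_mul' _ _ (by norm_num), ← mul_assoc]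
  norm_num

theorem measure_prod_eq_four_mul_measure_inter_quadrant [SFinite ν] {S : Set (ℝ × ℝ)}
    (hSm : MeasurableSet S) (hS₁ : ∀ x y, (-x, y) ∈ S ↔ (x, y) ∈ S)
    (hS₂ : ∀ x y, (x, -y) ∈ S ↔ (x, y) ∈ S) :
    ν.prod ν S = 4 * ν.prod ν (S ∩ Ici 0 ×ˢ Ici 0) := by
  have := lintegral_prod_eq_four_mul_setLIntegral_quadrant (ν := ν)
    (measurable_const.indicator hSm : Measurable (S.indicator 1))
    (fun x y => by classical simp only [indicator_apply, hS₁, Pi.one_apply])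
    (fun x y => by classical simp only [indicator_apply, hS₂, Pi.one_apply])
  rwa [lintegral_indicator_one hSm, lintegral_indicator_one hSm, Measure.restrict_apply hSm] at this

end Symmetry

instance isNegInvariant_gaussianReal_zero (v : ℝ≥0) : (gaussianReal 0 v).IsNegInvariant :=
  ⟨by simpa [Measure.neg] using gaussianReal_map_neg (μ := 0) (v := v)⟩

theorem gaussianReal_eq_withDensity (m : ℝ) {v : ℝ≥0} (hv : v ≠ 0) :
    gaussianReal m v = (gaussianReal 0 v).withDensity
      fun x => ENNReal.ofReal (Real.exp ((m * x - m ^ 2 / 2) / v)) := by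
  rw [gaussianReal_of_var_ne_zero _ hv, gaussianReal_of_var_ne_zero _ hv,
    ← withDensity_mul _ (measurable_gaussianPDF 0 v) (by fun_prop)]
  congr 1
  funext x
  simp only [Pi.mul_apply, gaussianPDF, gaussianPDFReal]
  rw [← ENNReal.ofReal_mul (by positivity), mul_assoc _ (Real.exp _), ← Real.exp_add]
  congr 3
  field_simp
  ring

theorem gaussianReal_prod_inter_quadrant_mul_le {m₀ m₁ : ℝ} (h₀ : m₀ ≤ 0) (h₁ : m₁ ≤ 0)
    {v : ℝ≥0} (hv : v ≠ 0) {S : Set (ℝ × ℝ)} (hS : IsUpperSet S) (hSm : MeasurableSet S) :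
    ((gaussianReal m₀ v).prod (gaussianReal m₁ v)) (S ∩ Ici 0 ×ˢ Ici 0) *
        ((gaussianReal 0 v).prod (gaussianReal 0 v)) (Ici 0 ×ˢ Ici 0) ≤
      ((gaussianReal 0 v).prod (gaussianReal 0 v)) (S ∩ Ici 0 ×ˢ Ici 0) *
        ((gaussianReal m₀ v).prod (gaussianReal m₁ v)) (Ici 0 ×ˢ Ici 0) := by
  set ν := (gaussianReal 0 v).restrict (Ici 0)
  set w : ℝ → ℝ → ℝ≥0∞ := fun m x => ENNReal.ofReal (Real.exp ((m * x - m ^ 2 / 2) / v))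
  have hw (m : ℝ) : Measurable (w m) := by fun_prop
  have hw_anti {m : ℝ} (hm : m ≤ 0) : Antitone (w m) := fun x y h => by
    simp only [w]
    gcongr ENNReal.ofReal (Real.exp (?_ / _))
    nlinarith
  have tilt : (ν.prod ν).withDensity (fun p => w m₀ p.1 * w m₁ p.2) =
      ((gaussianReal m₀ v).prod (gaussianReal m₁ v)).restrict (Ici 0 ×ˢ Ici 0) := by
    rw [← prod_withDensity (hw m₀) (hw m₁), ← Measure.prod_restrict,
      gaussianReal_eq_withDensity m₀ hv, gaussianReal_eq_withDensity m₁ hv,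
      restrict_withDensity measurableSet_Ici, restrict_withDensity measurableSet_Ici]
  have harris := hS.monotone_indicator_one.measure_univ_mul_lintegral_prod_mul_le
    (ν₁ := ν) (ν₂ := ν) (G := fun p => w m₀ p.1 * w m₁ p.2)
    (fun p r h => mul_le_mul' (hw_anti h₀ h.1) (hw_anti h₁ h.2))
    (measurable_const.indicator hSm) (by fun_prop)
  have hQ : ν univ * ν univ = ((gaussianReal 0 v).prod (gaussianReal 0 v)) (Ici 0 ×ˢ Ici 0) := by
    rw [Measure.prod_prod, Measure.restrict_apply_univ]
  have hSQ : ∫⁻ p, S.indicator 1 p ∂(ν.prod ν) =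
      ((gaussianReal 0 v).prod (gaussianReal 0 v)) (S ∩ Ici 0 ×ˢ Ici 0) := by
    rw [lintegral_indicator_one hSm, Measure.prod_restrict, Measure.restrict_apply hSm]
  have hSQ_tilt : ∫⁻ p, S.indicator 1 p * (w m₀ p.1 * w m₁ p.2) ∂(ν.prod ν) =
      ((gaussianReal m₀ v).prod (gaussianReal m₁ v)) (S ∩ Ici 0 ×ˢ Ici 0) := by
    simp_rw [← indicator_mul_left S 1 fun p : ℝ × ℝ => w m₀ p.1 * w m₁ p.2, Pi.one_apply,
      one_mul]
    rw [lintegral_indicator hSm, ← withDensity_apply _ hSm, tilt, Measure.restrict_apply hSm]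
  have hQ_tilt : ∫⁻ p, w m₀ p.1 * w m₁ p.2 ∂(ν.prod ν) =
      ((gaussianReal m₀ v).prod (gaussianReal m₁ v)) (Ici 0 ×ˢ Ici 0) := by
    rw [← setLIntegral_univ, ← withDensity_apply _ MeasurableSet.univ, tilt,
      Measure.restrict_apply_univ]
  rw [hQ, hSQ, hSQ_tilt, hQ_tilt] at harris
  rwa [mul_comm]

theorem measure_pi_finTwo_apply {α : Type*} [MeasurableSpace α] {ν : Fin 2 → Measure α}
    [∀ i, SigmaFinite (ν i)] {s : Set (α × α)} (hs : MeasurableSet s) :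
    Measure.pi ν {y | (y 0, y 1) ∈ s} = (ν 0).prod (ν 1) s :=
  (measurePreserving_piFinTwo ν).measure_preimage hs.nullMeasurableSet

theorem chiSq_two_Ioi (q : ℝ) :
    chiSq 2 (Ioi q) = (gaussianReal 0 1).prod (gaussianReal 0 1) {p | q < p.1 ^ 2 + p.2 ^ 2} := by
  rw [chiSq, Measure.map_apply (by fun_prop : Measurable fun x : Fin 2 → ℝ => ∑ i, x i ^ 2)
    measurableSet_Ioi]
  simp only [Fin.sum_univ_two]
  exact measure_pi_finTwo_apply (ν := fun _ => gaussianReal 0 1)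
    (measurableSet_lt measurable_const
      (by fun_prop : Measurable fun p : ℝ × ℝ => p.1 ^ 2 + p.2 ^ 2))

theorem isUpperSet_sq_add_sq_gt_inter_quadrant (q : ℝ) :
    IsUpperSet ({p : ℝ × ℝ | q < p.1 ^ 2 + p.2 ^ 2} ∩ Ici 0 ×ˢ Ici 0) := by
  rintro p r hpr ⟨hpq, hp₁, hp₂⟩
  refine ⟨?_, hp₁.trans hpr.1, hp₂.trans hpr.2⟩
  have := pow_le_pow_left₀ (mem_Ici.1 hp₁) hpr.1 2
  have := pow_le_pow_left₀ (mem_Ici.1 hp₂) hpr.2 2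
  simp only [mem_ofPred_eq] at hpq ⊢
  linarith

theorem stmt6_general (μ : Fin 2 → ℝ) (hμ : ∀ i, μ i ≤ 0) (α : ℝ)
    (q₂ : ℝ) (hq₂ : chiSq 2 {x | q₂ < x} = ENNReal.ofReal α) :
    (Measure.pi fun i : Fin 2 => gaussianReal (μ i) 1)
        {y | (y 0) ^ 2 + (y 1) ^ 2 > q₂ ∧ 0 ≤ y 0 ∧ 0 ≤ y 1} /
      (Measure.pi fun i : Fin 2 => gaussianReal (μ i) 1) {y | 0 ≤ y 0 ∧ 0 ≤ y 1} ≤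
    ENNReal.ofReal α := by
  have : NullSingletonClass (gaussianReal 0 1) := nullSingletonClass_gaussianReal one_ne_zero
  set G := (gaussianReal 0 1).prod (gaussianReal 0 1)
  set A : Set (ℝ × ℝ) := {p | q₂ < p.1 ^ 2 + p.2 ^ 2}
  set Q : Set (ℝ × ℝ) := Ici 0 ×ˢ Ici 0
  have hA : MeasurableSet A := measurableSet_lt measurable_const (by fun_prop)
  have hQ : MeasurableSet Q := measurableSet_Ici.prod measurableSet_Ici
  have hGA : G A = 4 * G (A ∩ Q) := measure_prod_eq_four_mul_measure_inter_quadrant hA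
    (fun x y => by simp [A]) (fun x y => by simp [A])
  have hGQ : 1 = 4 * G Q := by
    simpa only [measure_univ, univ_inter] using
      measure_prod_eq_four_mul_measure_inter_quadrant (ν := gaussianReal 0 1)
      MeasurableSet.univ (fun _ _ => Iff.rfl) (fun _ _ => Iff.rfl)
  have hcompare := gaussianReal_prod_inter_quadrant_mul_le (hμ 0) (hμ 1) one_ne_zero
    (isUpperSet_sq_add_sq_gt_inter_quadrant q₂) (hA.inter hQ)
  rw [inter_assoc, inter_self] at hcompare
  rw [Ioi_def, chiSq_two_Ioi, hGA] at hq₂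
  change Measure.pi _ {y : Fin 2 → ℝ | (y 0, y 1) ∈ A ∩ Q} /
    Measure.pi _ {y : Fin 2 → ℝ | (y 0, y 1) ∈ Q} ≤ _
  rw [measure_pi_finTwo_apply (hA.inter hQ), measure_pi_finTwo_apply hQ]
  refine ENNReal.div_le_of_le_mul ?_
  calc _ = _ * (4 * G Q) := by rw [← hGQ, mul_one]
    _ ≤ 4 * (G (A ∩ Q) * _) := by rw [mul_left_comm]; exact mul_le_mul_right hcompare 4
    _ = ENNReal.ofReal α * _ := by rw [← mul_assoc, hq₂]

/-- for independent Yᵢ ~ N(μᵢ,1) with μᵢ ≤ 0 and q₂ the (1-α)-quantile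
of χ²(2), P(Y₁² + Y₂² > q₂ | Y₁ ≥ 0, Y₂ ≥ 0) ≤ α. -/
theorem stmt6 (μ : Fin 2 → ℝ) (hμ : ∀ i, μ i ≤ 0) (α : ℝ) (hα : α ∈ Set.Ioo (0:ℝ) 1)
    (q₂ : ℝ) (hq₂ : chiSq 2 {x | q₂ < x} = ENNReal.ofReal α)
    (hpos : 0 < (Measure.pi fun i : Fin 2 => gaussianReal (μ i) 1)
      {y | 0 ≤ y 0 ∧ 0 ≤ y 1}) :
    (Measure.pi fun i : Fin 2 => gaussianReal (μ i) 1)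
        {y | (y 0) ^ 2 + (y 1) ^ 2 > q₂ ∧ 0 ≤ y 0 ∧ 0 ≤ y 1} /
      (Measure.pi fun i : Fin 2 => gaussianReal (μ i) 1) {y | 0 ≤ y 0 ∧ 0 ≤ y 1} ≤
    ENNReal.ofReal α :=
  stmt6_general μ hμ α q₂ hq₂
end

section
/- Let Y ~ N(μ, I₂) with μ₁ ≤ 0 and μ₂ ≤ 0, and α ∈ (0,1). Define LR = Y₁²·1{Y₁≥0} + Y₂²·1{Y₂≥0} and the random critical value q(Y,α) equal to 0 if Y₁≤0,Y₂≤0; to q₁ (the (1-α)-quantile of χ²(1)) if exactly one coordinate is positive; and to q₂ (the (1-α)-quantile of χ²(2)) if both are positive. Then P(LR > q(Y,α)) ≤ (3/4)α. -/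
/-! The rejection event lies in the union of `{Y₁ > √q₁, Y₂ ≤ 0}`, `{Y₁ ≤ 0, Y₂ > √q₁}` and
`{Y₁ > 0, Y₂ > 0, Y₁² + Y₂² > q₂}`. The Gaussian location family has a monotone likelihood ratio,
so for `m ≤ 0` the conditional probability `P_m(Y > √q₁ | Y > 0)` is at most its value `α` at
`m = 0`. With `pᵢ = P(Yᵢ > 0) ≤ 1/2`, the first two events thus have total probability at most
`α (p₁ (1 - p₂) + (1 - p₁) p₂) ≤ α / 2`. The third event is an upper set, so its probability is
largest at `μ = 0`, where the invariance of the standard Gaussian under sign changes of the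
coordinates makes it a quarter of `P(χ²(2) > q₂) = α`. -/

open MeasureTheory ProbabilityTheory

/-- The adaptive critical value for the two-dimensional orthant test. -/
noncomputable def critValue (q₁ q₂ : ℝ) (y : Fin 2 → ℝ) : ℝ :=
  if y 0 ≤ 0 ∧ y 1 ≤ 0 then 0
  else if (0 ≤ y 0 ∧ y 1 ≤ 0) ∨ (y 0 ≤ 0 ∧ 0 ≤ y 1) then q₁
  else q₂

open Set
open scoped ENNReal NNReal

theorem gaussianPDFReal_mul_le_mul {m m' u w : ℝ} (hm : m ≤ m') (hwu : w ≤ u) (v : ℝ≥0) :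
    gaussianPDFReal m v u * gaussianPDFReal m' v w ≤
      gaussianPDFReal m' v u * gaussianPDFReal m v w := by
  simp only [gaussianPDFReal]
  rw [mul_mul_mul_comm, ← Real.exp_add, mul_mul_mul_comm, ← Real.exp_add]
  gcongr ?_ * Real.exp ?_
  rw [← add_div, ← add_div]
  refine div_le_div_of_nonneg_right ?_ (by positivity)
  nlinarith [mul_nonneg (sub_nonneg.2 hm) (sub_nonneg.2 hwu)]

theorem gaussianReal_Ioi_mul_le_mul {m m' s t : ℝ} (hm : m ≤ m') (hst : s ≤ t) {v : ℝ≥0}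
    (hv : v ≠ 0) :
    gaussianReal m v (Ioi t) * gaussianReal m' v (Ioi s) ≤
      gaussianReal m' v (Ioi t) * gaussianReal m v (Ioi s) := by
  -- Split `Ioi s = Ioc s t ∪ Ioi t`: the `Ioi t × Ioi t` terms agree on both sides.
  have cross : gaussianReal m v (Ioi t) * gaussianReal m' v (Ioc s t) ≤
      gaussianReal m' v (Ioi t) * gaussianReal m v (Ioc s t) := by
    simp only [gaussianReal_apply _ hv]
    rw [← lintegral_lintegral_mul (by fun_prop) (by fun_prop),
      ← lintegral_lintegral_mul (by fun_prop) (by fun_prop)]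
    refine setLIntegral_mono (by fun_prop) fun u hu =>
      setLIntegral_mono (by fun_prop) fun w hw => ?_
    simp only [gaussianPDF, ← ENNReal.ofReal_mul (gaussianPDFReal_nonneg _ _ _)]
    exact ENNReal.ofReal_le_ofReal (gaussianPDFReal_mul_le_mul hm (hw.2.trans hu.le) v)
  rw [← Ioc_union_Ioi_eq_Ioi hst, measure_union Ioc_disjoint_Ioi_same measurableSet_Ioi,
    measure_union Ioc_disjoint_Ioi_same measurableSet_Ioi, mul_add, mul_add,
    mul_comm (gaussianReal m' v (Ioi t)) (gaussianReal m v (Ioi t))]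
  gcongr

theorem measure_le_map_add_right_of_isUpperSet {G : Type*} [AddGroup G] [PartialOrder G]
    [AddLeftMono G] [MeasurableSpace G] [MeasurableAdd G] (P : Measure G) {c : G} (hc : 0 ≤ c)
    {U : Set G} (hU : IsUpperSet U) : P U ≤ P.map (· + c) U := by
  rw [← MeasurableEquiv.coe_addRight, MeasurableEquiv.map_apply]
  exact measure_mono fun x hx => hU (le_add_of_nonneg_right hc) hx

theorem gaussianReal_le_of_isUpperSet {m m' : ℝ} (hm : m ≤ m') (v : ℝ≥0) {U : Set ℝ}
    (hU : IsUpperSet U) : gaussianReal m v U ≤ gaussianReal m' v U := by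
  have h := measure_le_map_add_right_of_isUpperSet (gaussianReal m v) (sub_nonneg.2 hm) hU
  rwa [gaussianReal_map_add_const, add_sub_cancel] at h

theorem measure_pi_gaussianReal_le_of_isUpperSet {ι : Type*} [Fintype ι] {μ ν : ι → ℝ}
    (hμν : μ ≤ ν) (v : ℝ≥0) {U : Set (ι → ℝ)} (hU : IsUpperSet U) :
    Measure.pi (fun i => gaussianReal (μ i) v) U ≤
      Measure.pi (fun i => gaussianReal (ν i) v) U := by
  have shift : (Measure.pi fun i => gaussianReal (μ i) v).map (· + (ν - μ)) =
      Measure.pi fun i => gaussianReal (ν i) v :=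
    (measurePreserving_pi _ _ fun i => ⟨measurable_add_const (ν i - μ i), by
      rw [gaussianReal_map_add_const, add_sub_cancel]⟩).map_eq
  rw [← shift]
  exact measure_le_map_add_right_of_isUpperSet _ (sub_nonneg.2 hμν) hU

theorem gaussianReal_zero_Iio_neg {v : ℝ≥0} (t : ℝ) :
    gaussianReal 0 v (Iio (-t)) = gaussianReal 0 v (Ioi t) := by
  have h : (gaussianReal 0 v).map (fun x => -x) = gaussianReal 0 v := by
    rw [gaussianReal_map_neg, neg_zero]
  conv_rhs => rw [← h]
  rw [Measure.map_apply measurable_neg measurableSet_Ioi]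
  congr 1
  ext x
  simp

theorem gaussianReal_zero_Ioi_zero {v : ℝ≥0} (hv : v ≠ 0) : gaussianReal 0 v (Ioi 0) = 2⁻¹ := by
  have := nullSingletonClass_gaussianReal (μ := 0) hv
  have h : gaussianReal 0 v (Iic 0) + gaussianReal 0 v (Ioi 0) = 1 := by
    rw [← measure_union (Iic_disjoint_Ioi le_rfl) measurableSet_Ioi, Iic_union_Ioi, measure_univ]
  have hsymm := gaussianReal_zero_Iio_neg (v := v) 0
  rw [neg_zero] at hsymm
  rw [← measure_congr Iio_ae_eq_Iic, hsymm, ← two_mul] at h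
  exact ENNReal.eq_inv_of_mul_eq_one_left (by rwa [mul_comm])

theorem two_mul_gaussianReal_Ioi_sqrt_le_chiSq_one (q : ℝ) :
    2 * gaussianReal 0 1 (Ioi √q) ≤ chiSq 1 (Ioi q) := by
  have hsq : chiSq 1 (Ioi q) = gaussianReal 0 1 ((· ^ 2) ⁻¹' Ioi q) := by
    rw [chiSq, Measure.map_apply (by fun_prop) measurableSet_Ioi,
      ← (measurePreserving_funUnique (gaussianReal 0 1) (Fin 1)).measure_preimage_equiv]
    congr 1
    ext
    simp [MeasurableEquiv.funUnique]
  have hsub : Iio (-√q) ∪ Ioi √q ⊆ (· ^ 2) ⁻¹' Ioi q := by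
    rintro z (hz | hz)
    · simpa using Real.lt_sq_of_sqrt_lt (lt_neg.1 hz)
    · exact Real.lt_sq_of_sqrt_lt hz
  calc 2 * gaussianReal 0 1 (Ioi √q)
      = gaussianReal 0 1 (Iio (-√q) ∪ Ioi √q) := by
        rw [measure_union ((Iic_disjoint_Ioi (neg_le_self (Real.sqrt_nonneg q))).mono_left
          Iio_subset_Iic_self) measurableSet_Ioi, gaussianReal_zero_Iio_neg, two_mul]
    _ ≤ chiSq 1 (Ioi q) := hsq ▸ measure_mono hsub

theorem gaussianReal_Ioi_sqrt_le_chiSq_one_mul {m : ℝ} (hm : m ≤ 0) (q : ℝ) :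
    gaussianReal m 1 (Ioi √q) ≤ chiSq 1 (Ioi q) * gaussianReal m 1 (Ioi 0) := by
  have hmlr := gaussianReal_Ioi_mul_le_mul hm (Real.sqrt_nonneg q) one_ne_zero
  rw [gaussianReal_zero_Ioi_zero one_ne_zero] at hmlr
  calc gaussianReal m 1 (Ioi √q)
      = 2 * (gaussianReal m 1 (Ioi √q) * 2⁻¹) := by
        rw [mul_left_comm, ENNReal.mul_inv_cancel two_ne_zero ENNReal.ofNat_ne_top, mul_one]
    _ ≤ 2 * gaussianReal 0 1 (Ioi √q) * gaussianReal m 1 (Ioi 0) := by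
        rw [mul_assoc]
        gcongr
    _ ≤ chiSq 1 (Ioi q) * gaussianReal m 1 (Ioi 0) := by
        gcongr
        exact two_mul_gaussianReal_Ioi_sqrt_le_chiSq_one q

theorem two_mul_measure_inter_le {α : Type*} [MeasurableSpace α] {P : Measure α} {σ : α → α}
    (hσ : MeasurePreserving σ P P) {S T : Set α} (hS : σ ⁻¹' S = S) (hT : Disjoint T (σ ⁻¹' T))
    (hST : MeasurableSet (S ∩ T)) : 2 * P (S ∩ T) ≤ P S :=
  calc 2 * P (S ∩ T) = P (S ∩ T) + P (σ ⁻¹' (S ∩ T)) := by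
        rw [hσ.measure_preimage hST.nullMeasurableSet, two_mul]
    _ = P (S ∩ T ∪ σ ⁻¹' (S ∩ T)) :=
        (measure_union (hT.mono inter_subset_right (preimage_mono inter_subset_right))
          (hσ.measurable hST)).symm
    _ ≤ P S := measure_mono <| union_subset inter_subset_left <| by
        rw [preimage_inter, hS]
        exact inter_subset_left

def negCoord {ι : Type*} [DecidableEq ι] (i : ι) (z : ι → ℝ) : ι → ℝ :=
  fun j => if j = i then -z j else z j

theorem measurePreserving_negCoord {ι : Type*} [Fintype ι] [DecidableEq ι] (v : ℝ≥0) (i : ι) :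
    MeasurePreserving (negCoord i) (Measure.pi fun _ : ι => gaussianReal 0 v)
      (Measure.pi fun _ : ι => gaussianReal 0 v) := by
  refine measurePreserving_pi (f := fun j x => if j = i then -x else x) _ _ fun j => ?_
  by_cases h : j = i
  · simp only [h, if_true]
    exact ⟨measurable_neg, by rw [gaussianReal_map_neg, neg_zero]⟩
  · simp only [h, if_false]
    exact MeasurePreserving.id _

theorem four_mul_measure_pi_gaussianReal_quadrant_le (v : ℝ≥0) {S : Set (Fin 2 → ℝ)}
    (hS : MeasurableSet S) (hneg : ∀ i, negCoord i ⁻¹' S = S) :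
    4 * Measure.pi (fun _ => gaussianReal 0 v) (S ∩ {z | 0 < z 0} ∩ {z | 0 < z 1}) ≤
      Measure.pi (fun _ => gaussianReal 0 v) S := by
  have hT : ∀ i : Fin 2, MeasurableSet {z : Fin 2 → ℝ | 0 < z i} :=
    fun i => measurableSet_lt measurable_const (measurable_pi_apply i)
  have hdisj : ∀ i : Fin 2, Disjoint {z : Fin 2 → ℝ | 0 < z i} (negCoord i ⁻¹' {z | 0 < z i}) :=
    fun i => disjoint_left.2 fun z hz hz' => by
      simp only [negCoord, mem_preimage, mem_ofPred_eq, if_true] at hz hz'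
      linarith
  have hneg₁ : negCoord 1 ⁻¹' (S ∩ {z | 0 < z 0}) = S ∩ {z | 0 < z 0} := by
    rw [preimage_inter, hneg 1]
    rfl
  calc 4 * Measure.pi (fun _ => gaussianReal 0 v) (S ∩ {z | 0 < z 0} ∩ {z | 0 < z 1})
      = 2 * (2 * Measure.pi (fun _ => gaussianReal 0 v) (S ∩ {z | 0 < z 0} ∩ {z | 0 < z 1})) := by
        rw [← mul_assoc]
        norm_num
    _ ≤ 2 * Measure.pi (fun _ => gaussianReal 0 v) (S ∩ {z | 0 < z 0}) := by
        gcongr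
        exact two_mul_measure_inter_le (measurePreserving_negCoord v 1) hneg₁ (hdisj 1)
          ((hS.inter (hT 0)).inter (hT 1))
    _ ≤ Measure.pi (fun _ => gaussianReal 0 v) S :=
        two_mul_measure_inter_le (measurePreserving_negCoord v 0) (hneg 0) (hdisj 0)
          (hS.inter (hT 0))

theorem four_mul_measure_pi_gaussianReal_quadrant_le_chiSq_two (q : ℝ) :
    4 * Measure.pi (fun _ => gaussianReal 0 1)
        ({z : Fin 2 → ℝ | q < ∑ i, z i ^ 2} ∩ {z | 0 < z 0} ∩ {z | 0 < z 1}) ≤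
      chiSq 2 (Ioi q) := by
  have hmeas : Measurable fun z : Fin 2 → ℝ => ∑ i, z i ^ 2 := by fun_prop
  rw [chiSq, Measure.map_apply hmeas measurableSet_Ioi]
  refine four_mul_measure_pi_gaussianReal_quadrant_le 1 (hmeas measurableSet_Ioi) fun i => ?_
  ext z
  have hsq : ∀ j, (if j = i then -z j else z j) ^ 2 = z j ^ 2 := fun j => by split_ifs <;> ring
  simp only [mem_preimage, mem_ofPred_eq, negCoord, hsq]

theorem isUpperSet_quadrant_inter_setOf_lt_sum_sq (q : ℝ) :
    IsUpperSet ({z : Fin 2 → ℝ | q < ∑ i, z i ^ 2} ∩ {z | 0 < z 0} ∩ {z | 0 < z 1}) := by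
  rintro y z hyz ⟨⟨hq, h0⟩, h1⟩
  have hyz0 := hyz 0
  have hyz1 := hyz 1
  simp only [mem_inter_iff, mem_ofPred_eq, Fin.sum_univ_two] at hq h0 h1 ⊢
  exact ⟨⟨by nlinarith, by linarith⟩, by linarith⟩

theorem ENNReal.mul_add_mul_le_inv_two {a b c d : ℝ≥0∞} (hab : a + b = 1) (hcd : c + d = 1)
    (ha : a ≤ 2⁻¹) (hc : c ≤ 2⁻¹) : a * d + b * c ≤ 2⁻¹ := by
  have hb : b ≠ ⊤ := ne_top_of_le_ne_top one_ne_top (hab ▸ le_add_self)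
  have hd : d ≠ ⊤ := ne_top_of_le_ne_top one_ne_top (hcd ▸ le_add_self)
  lift a to ℝ≥0 using ne_top_of_le_ne_top (by simp) ha
  lift b to ℝ≥0 using hb
  lift c to ℝ≥0 using ne_top_of_le_ne_top (by simp) hc
  lift d to ℝ≥0 using hd
  rw [← ENNReal.coe_two, ← ENNReal.coe_inv two_ne_zero] at ha hc ⊢
  norm_cast at *
  rw [← NNReal.coe_le_coe] at *
  push_cast at *
  nlinarith

theorem setOf_critValue_lt_subset (q₁ q₂ : ℝ) :
    {y : Fin 2 → ℝ | (if 0 ≤ y 0 then (y 0) ^ 2 else 0) + (if 0 ≤ y 1 then (y 1) ^ 2 else 0)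
        > critValue q₁ q₂ y} ⊆
      univ.pi ![Ioi √q₁, Iic 0] ∪ univ.pi ![Iic 0, Ioi √q₁] ∪
        ({z | q₂ < ∑ i, z i ^ 2} ∩ {z | 0 < z 0} ∩ {z | 0 < z 1}) := by
  intro y hy
  simp only [critValue, mem_ofPred_eq] at hy
  simp only [mem_union, mem_pi, mem_univ, forall_const, Fin.forall_fin_two, mem_inter_iff,
    mem_ofPred_eq, Fin.sum_univ_two, Matrix.cons_val_zero, Matrix.cons_val_one, mem_Ioi, mem_Iic]
  rcases le_or_gt (y 0) 0 with h0 | h0 <;> rcases le_or_gt (y 1) 0 with h1 | h1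
  · simp only [h0, h1, and_self, if_true] at hy
    split_ifs at hy <;> nlinarith
  · have hq : q₁ < y 1 ^ 2 := by
      simp only [h0, h1.le, not_le.2 h1, and_true, and_false, or_true, if_true, if_false] at hy
      split_ifs at hy <;> nlinarith
    exact Or.inl (Or.inr ⟨h0, (Real.sqrt_lt' h1).2 hq⟩)
  · have hq : q₁ < y 0 ^ 2 := by
      simp only [h0.le, h1, not_le.2 h0, and_true, true_or, if_true, if_false] at hy
      split_ifs at hy <;> nlinarith
    exact Or.inl (Or.inl ⟨(Real.sqrt_lt' h0).2 hq, h1⟩)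
  · simp only [h0.le, h1.le, not_le.2 h0, not_le.2 h1, and_false, false_and, or_false,
      if_true, if_false] at hy
    exact Or.inr ⟨⟨hy, h0⟩, h1⟩

theorem measure_pi_gaussianReal_one_coord_tail_le {μ : Fin 2 → ℝ} (hμ : ∀ i, μ i ≤ 0) (q : ℝ) :
    Measure.pi (fun i => gaussianReal (μ i) 1) (univ.pi ![Ioi √q, Iic 0]) +
        Measure.pi (fun i => gaussianReal (μ i) 1) (univ.pi ![Iic 0, Ioi √q]) ≤
      chiSq 1 (Ioi q) / 2 := by
  have hhalf (i : Fin 2) : gaussianReal (μ i) 1 (Ioi 0) ≤ 2⁻¹ :=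
    gaussianReal_zero_Ioi_zero (v := 1) one_ne_zero ▸
      gaussianReal_le_of_isUpperSet (hμ i) 1 (isUpperSet_Ioi 0)
  have hsplit (i : Fin 2) : gaussianReal (μ i) 1 (Ioi 0) + gaussianReal (μ i) 1 (Iic 0) = 1 := by
    rw [add_comm, ← measure_union (Iic_disjoint_Ioi le_rfl) measurableSet_Ioi, Iic_union_Ioi,
      measure_univ]
  simp only [Measure.pi_pi, Fin.prod_univ_two, Matrix.cons_val_zero, Matrix.cons_val_one]
  calc _ ≤ chiSq 1 (Ioi q) * gaussianReal (μ 0) 1 (Ioi 0) * gaussianReal (μ 1) 1 (Iic 0) +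
        gaussianReal (μ 0) 1 (Iic 0) * (chiSq 1 (Ioi q) * gaussianReal (μ 1) 1 (Ioi 0)) := by
        gcongr <;> exact gaussianReal_Ioi_sqrt_le_chiSq_one_mul (hμ _) q
    _ = chiSq 1 (Ioi q) * (gaussianReal (μ 0) 1 (Ioi 0) * gaussianReal (μ 1) 1 (Iic 0) +
        gaussianReal (μ 0) 1 (Iic 0) * gaussianReal (μ 1) 1 (Ioi 0)) := by ring
    _ ≤ chiSq 1 (Ioi q) / 2 := by
        rw [ENNReal.div_eq_inv_mul, mul_comm 2⁻¹]
        gcongr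
        exact ENNReal.mul_add_mul_le_inv_two (hsplit 0) (hsplit 1) (hhalf 0) (hhalf 1)

theorem measure_pi_gaussianReal_quadrant_tail_le {μ : Fin 2 → ℝ} (hμ : ∀ i, μ i ≤ 0) (q : ℝ) :
    Measure.pi (fun i => gaussianReal (μ i) 1)
        ({z | q < ∑ i, z i ^ 2} ∩ {z | 0 < z 0} ∩ {z | 0 < z 1}) ≤ chiSq 2 (Ioi q) / 4 := by
  rw [ENNReal.le_div_iff_mul_le (by norm_num) (by norm_num), mul_comm]
  refine le_trans ?_ (four_mul_measure_pi_gaussianReal_quadrant_le_chiSq_two q)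
  gcongr _ * ?_
  exact measure_pi_gaussianReal_le_of_isUpperSet (ν := fun _ => 0) hμ 1
    (isUpperSet_quadrant_inter_setOf_lt_sum_sq q)

theorem stmt7_general (μ : Fin 2 → ℝ) (hμ : ∀ i, μ i ≤ 0) (α : ℝ)
    (q₁ q₂ : ℝ)
    (hq₁ : chiSq 1 {x | q₁ < x} = ENNReal.ofReal α)
    (hq₂ : chiSq 2 {x | q₂ < x} = ENNReal.ofReal α) :
    (Measure.pi fun i : Fin 2 => gaussianReal (μ i) 1)
      {y | (if 0 ≤ y 0 then (y 0) ^ 2 else 0) + (if 0 ≤ y 1 then (y 1) ^ 2 else 0)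
            > critValue q₁ q₂ y} ≤
    ENNReal.ofReal (3 / 4 * α) := by
  set P := Measure.pi fun i : Fin 2 => gaussianReal (μ i) 1
  calc P _ ≤ P (univ.pi ![Ioi √q₁, Iic 0] ∪ univ.pi ![Iic 0, Ioi √q₁] ∪
          ({z | q₂ < ∑ i, z i ^ 2} ∩ {z | 0 < z 0} ∩ {z | 0 < z 1})) :=
        measure_mono (setOf_critValue_lt_subset q₁ q₂)
    _ ≤ chiSq 1 {x | q₁ < x} / 2 + chiSq 2 {x | q₂ < x} / 4 :=
        (measure_union_le _ _).trans <| add_le_add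
          ((measure_union_le _ _).trans (measure_pi_gaussianReal_one_coord_tail_le hμ q₁))
          (measure_pi_gaussianReal_quadrant_tail_le hμ q₂)
    _ = ENNReal.ofReal (3 / 4 * α) := by
        rw [hq₁, hq₂, ENNReal.ofReal, ENNReal.ofReal,
          Real.toNNReal_mul (by norm_num), Real.toNNReal_div (by norm_num)]
        norm_cast
        simp only [Real.toNNReal_ofNat]
        ring

/-- the adaptive-critical-value test for H₁ : μ ≤ 0 in dimension 2
has level at most (3/4)α. -/
theorem stmt7 (μ : Fin 2 → ℝ) (hμ : ∀ i, μ i ≤ 0) (α : ℝ) (hα : α ∈ Set.Ioo (0:ℝ) 1)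
    (q₁ q₂ : ℝ)
    (hq₁ : chiSq 1 {x | q₁ < x} = ENNReal.ofReal α)
    (hq₂ : chiSq 2 {x | q₂ < x} = ENNReal.ofReal α) :
    (Measure.pi fun i : Fin 2 => gaussianReal (μ i) 1)
      {y | (if 0 ≤ y 0 then (y 0) ^ 2 else 0) + (if 0 ≤ y 1 then (y 1) ^ 2 else 0)
            > critValue q₁ q₂ y} ≤
    ENNReal.ofReal (3 / 4 * α) :=
  stmt7_general μ hμ α q₁ q₂ hq₁ hq₂
end

section
/- Let C = {μ ∈ ℝᵖ : Aμ ≥ 0} be a polyhedral cone and C° = {y : yᵀμ ≤ 0 for all μ ∈ C} its polar cone. Let F be a face of C° with spanning linear subspace L and orthogonal projection P onto L. Then for every μ ∈ C and every y in the relative interior of F, yᵀPμ ≤ 0; i.e., Pμ lies in the polar cone of F. -/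
open MeasureTheory Set

/-- `F` is a face of the convex cone `K`: a convex subcone such that
`x, y ∈ K` with `x + y ∈ F` implies `x, y ∈ F`. -/
def IsFaceOfCone {E : Type*} [NormedAddCommGroup E] [InnerProductSpace ℝ E]
    (K F : Set E) : Prop :=
  F ⊆ K ∧ Convex ℝ F ∧ (∀ t : ℝ, 0 < t → ∀ x ∈ F, t • x ∈ F) ∧
    ∀ x ∈ K, ∀ y ∈ K, x + y ∈ F → x ∈ F ∧ y ∈ F

theorem inner_orthogonalProjectionOnto_span_nonpos_of_forall_inner_nonpos {E : Type*}
    [NormedAddCommGroup E] [InnerProductSpace ℝ E] {C F : Set E}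
    [(Submodule.span ℝ F).HasOrthogonalProjection]
    (hF : ∀ y ∈ F, ∀ x ∈ C, inner ℝ y x ≤ (0 : ℝ)) {μ : E} (hμ : μ ∈ C) {y : E} (hy : y ∈ F) :
    inner ℝ y (Submodule.orthogonalProjectionOnto (Submodule.span ℝ F) μ : E) ≤ (0 : ℝ) :=
  calc inner ℝ y (Submodule.orthogonalProjectionOnto (Submodule.span ℝ F) μ : E)
      = inner ℝ y μ :=
        Submodule.inner_orthogonalProjectionOnto_eq_of_mem_left ⟨y, Submodule.subset_span hy⟩ μ
    _ ≤ 0 := hF y hy μ hμ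

theorem stmt11_general (p : ℕ)
    (C : Set (EuclideanSpace ℝ (Fin p)))
    (Cpolar : Set (EuclideanSpace ℝ (Fin p)))
    (hCpolar : Cpolar = {y : EuclideanSpace ℝ (Fin p) | ∀ x ∈ C, inner ℝ y x ≤ (0:ℝ)})
    (F : Set (EuclideanSpace ℝ (Fin p))) (hF : IsFaceOfCone Cpolar F) :
    ∀ μ ∈ C, ∀ y ∈ intrinsicInterior ℝ F,
      inner ℝ y ((Submodule.orthogonalProjection (Submodule.span ℝ F) μ :
        EuclideanSpace ℝ (Fin p))) ≤ (0:ℝ) := by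
  subst hCpolar
  intro μ hμ y hy
  exact inner_orthogonalProjectionOnto_span_nonpos_of_forall_inner_nonpos
    (fun z hz => hF.1 hz) hμ (intrinsicInterior_subset hy)

/-- for a polyhedral cone C with polar C°, a face F of C° with
spanning subspace L and orthogonal projection P onto L, for every μ ∈ C and
y in the relative interior of F, ⟪y, Pμ⟫ ≤ 0 (i.e. Pμ is in the polar of F). -/
theorem stmt11 (p k : ℕ) (A : Matrix (Fin k) (Fin p) ℝ)
    (C : Set (EuclideanSpace ℝ (Fin p)))
    (hC : C = {x : EuclideanSpace ℝ (Fin p) | ∀ i, 0 ≤ A.mulVec (fun j => x j) i})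
    (Cpolar : Set (EuclideanSpace ℝ (Fin p)))
    (hCpolar : Cpolar = {y : EuclideanSpace ℝ (Fin p) | ∀ x ∈ C, inner ℝ y x ≤ (0:ℝ)})
    (F : Set (EuclideanSpace ℝ (Fin p))) (hF : IsFaceOfCone Cpolar F) :
    ∀ μ ∈ C, ∀ y ∈ intrinsicInterior ℝ F,
      inner ℝ y ((Submodule.orthogonalProjection (Submodule.span ℝ F) μ :
        EuclideanSpace ℝ (Fin p))) ≤ (0:ℝ) :=
  stmt11_general p C Cpolar hCpolar F hF
end

section
/- Let Y₁,…,Y_p be independent with Yᵢ ~ N(μᵢ, 1) and μᵢ ≤ 0 for all i. Fix a subset I ⊆ {1,…,p} with |I| = k ≥ 1 and let q_k be the (1-α)-quantile of χ²(k). Then P(∑_{i∈I} Yᵢ² > q_k | Yᵢ ≥ 0 for all i ∈ I) ≤ α. -/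
/-!
Conditioned on `Yᵢ ≥ 0` for `i ∈ I`, the coordinates `(Yᵢ)_{i ∈ I}` remain independent, with
laws `N(μᵢ, 1)` conditioned on `[0, ∞)`. Since the Gaussian family has a monotone likelihood
ratio, for `μᵢ ≤ 0` each of these laws is stochastically smaller than `N(0, 1)` conditioned on
`[0, ∞)`; stochastic order survives squaring nonnegative variables and adding independent ones.
Finally, by symmetry, conditioning `N(0, 1)` on its sign does not change the law of its square,
so the dominating sum of squares has exactly the `χ²(k)` law.
-/

open MeasureTheory ProbabilityTheory

open Real Set
open scoped ENNReal NNReal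

lemma gaussianPDFReal_eq_exp_mul (m m' : ℝ) {v : ℝ≥0} (hv : v ≠ 0) (x : ℝ) :
    gaussianPDFReal m v x
      = exp (((m - m') * x - (m ^ 2 - m' ^ 2) / 2) / v) * gaussianPDFReal m' v x := by
  have hv' : (v : ℝ) ≠ 0 := mod_cast hv
  simp only [gaussianPDFReal, mul_left_comm _ (√_)⁻¹, ← exp_add]
  congr 2
  field_simp
  ring

/-- Monotone likelihood ratio: for `m ≤ m'` the density of `N(m, v)` with respect to `N(m', v)`
is nonincreasing, hence at most its value at `c` on `T` and at least that value on `S`. -/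
lemma gaussianReal_mul_le_mul_of_le {m m' : ℝ} (hm : m ≤ m') {v : ℝ≥0} (hv : v ≠ 0)
    {S T : Set ℝ} {c : ℝ} (hS : S ⊆ Iic c) (hT : T ⊆ Ici c) :
    gaussianReal m v T * gaussianReal m' v S ≤ gaussianReal m' v T * gaussianReal m v S := by
  set ratio : ℝ → ℝ≥0∞ := fun x ↦
    ENNReal.ofReal (exp (((m - m') * x - (m ^ 2 - m' ^ 2) / 2) / v))
  have hpdf (x : ℝ) : gaussianPDF m v x = ratio x * gaussianPDF m' v x := by
    rw [gaussianPDF, gaussianPDF, ← ENNReal.ofReal_mul (exp_nonneg _),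
      gaussianPDFReal_eq_exp_mul m m' hv]
  have hanti : Antitone ratio := fun x y hxy ↦ by
    simp only [ratio]
    gcongr ENNReal.ofReal (exp ((?_ - _) / _))
    exact mul_le_mul_of_nonpos_left hxy (sub_nonpos.2 hm)
  have hT' : gaussianReal m v T ≤ ratio c * gaussianReal m' v T := by
    rw [gaussianReal_apply _ hv, gaussianReal_apply _ hv,
      ← lintegral_const_mul' _ _ ENNReal.ofReal_ne_top]
    refine setLIntegral_mono (by fun_prop) fun x hx ↦ ?_
    rw [hpdf]
    gcongr
    exact hanti (hT hx)
  have hS' : ratio c * gaussianReal m' v S ≤ gaussianReal m v S := by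
    rw [gaussianReal_apply _ hv, gaussianReal_apply _ hv,
      ← lintegral_const_mul' _ _ ENNReal.ofReal_ne_top]
    refine setLIntegral_mono (by fun_prop) fun x hx ↦ ?_
    rw [hpdf]
    gcongr
    exact hanti (hS hx)
  calc gaussianReal m v T * gaussianReal m' v S
      ≤ gaussianReal m' v T * (ratio c * gaussianReal m' v S) := by
        rw [mul_left_comm, ← mul_assoc]; gcongr
    _ ≤ gaussianReal m' v T * gaussianReal m v S := by gcongr

lemma gaussianReal_Ici_ne_zero (m : ℝ) {v : ℝ≥0} (hv : v ≠ 0) (a : ℝ) :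
    gaussianReal m v (Ici a) ≠ 0 :=
  fun h ↦ by simpa using gaussianReal_absolutelyContinuous' m hv h

lemma cond_gaussianReal_Ici_Ioi_le {m m' : ℝ} (hm : m ≤ m') {v : ℝ≥0} (hv : v ≠ 0)
    (a c : ℝ) :
    (gaussianReal m v)[|Ici a] (Ioi c) ≤ (gaussianReal m' v)[|Ici a] (Ioi c) := by
  rw [cond_apply measurableSet_Ici, cond_apply measurableSet_Ici]
  rcases lt_or_ge c a with hca | hac
  · rw [inter_eq_left.2 (Ici_subset_Ioi.2 hca),
      ENNReal.inv_mul_cancel (gaussianReal_Ici_ne_zero m hv a) (measure_ne_top _ _),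
      ENNReal.inv_mul_cancel (gaussianReal_Ici_ne_zero m' hv a) (measure_ne_top _ _)]
  have hsplit (ρ : Measure ℝ) : ρ (Ici a) = ρ (Icc a c) + ρ (Ioi c) := by
    rw [← Icc_union_Ioi_eq_Ici hac,
      measure_union (Iic_disjoint_Ioi le_rfl |>.mono_left Icc_subset_Iic_self) measurableSet_Ioi]
  -- cross-multiply and split `Ici a = Icc a c ∪ Ioi c`; the likelihood-ratio bound remains
  rw [inter_eq_right.2 (Ioi_subset_Ici hac), ← ENNReal.div_eq_inv_mul, ← ENNReal.div_eq_inv_mul,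
    ENNReal.div_le_iff (gaussianReal_Ici_ne_zero m hv a) (measure_ne_top _ _),
    ← ENNReal.mul_div_right_comm, ENNReal.le_div_iff_mul_le
      (.inl (gaussianReal_Ici_ne_zero m' hv a)) (.inl (measure_ne_top _ _)), hsplit, hsplit,
    mul_add, mul_add]
  exact add_le_add (gaussianReal_mul_le_mul_of_le hm hv Icc_subset_Iic_self Ioi_subset_Ici_self)
    (mul_comm _ _).le

lemma map_sq_cond_gaussianReal_Ici_zero_Ioi_le {m m' : ℝ} (hm : m ≤ m') {v : ℝ≥0}
    (hv : v ≠ 0) (c : ℝ) :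
    ((gaussianReal m v)[|Ici 0]).map (· ^ 2) (Ioi c)
      ≤ ((gaussianReal m' v)[|Ici 0]).map (· ^ 2) (Ioi c) := by
  rw [Measure.map_apply (by fun_prop) measurableSet_Ioi,
    Measure.map_apply (by fun_prop) measurableSet_Ioi]
  rcases lt_or_ge c 0 with hc | hc
  · have : (· ^ 2) ⁻¹' Ioi c = univ := eq_univ_of_forall fun x ↦ hc.trans_le (sq_nonneg x)
    rw [this, cond_apply measurableSet_Ici, cond_apply measurableSet_Ici, inter_univ,
      ENNReal.inv_mul_cancel (gaussianReal_Ici_ne_zero m hv 0) (measure_ne_top _ _),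
      ENNReal.inv_mul_cancel (gaussianReal_Ici_ne_zero m' hv 0) (measure_ne_top _ _)]
  have hslice : Ici 0 ∩ (· ^ 2) ⁻¹' Ioi c = Ici 0 ∩ Ioi (√c) := by
    ext x
    simp only [mem_inter_iff, mem_Ici, mem_preimage, mem_Ioi, and_congr_right_iff]
    exact fun hx ↦ (sqrt_lt hc hx).symm
  rw [cond_apply measurableSet_Ici, cond_apply measurableSet_Ici, hslice,
    ← cond_apply measurableSet_Ici, ← cond_apply measurableSet_Ici]
  exact cond_gaussianReal_Ici_Ioi_le hm hv 0 _

section Symmetric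

variable {ρ : Measure ℝ} [NullSingletonClass ρ]

lemma two_mul_measure_Ici_zero_inter (hρ : ρ.map (fun x ↦ -x) = ρ) {S : Set ℝ}
    (hS : MeasurableSet S) (hS_neg : (fun x ↦ -x) ⁻¹' S = S) :
    2 * ρ (Ici 0 ∩ S) = ρ S := by
  have hIic : ρ (Iic 0 ∩ S) = ρ (Ici 0 ∩ S) := by
    conv_lhs => rw [← hρ]
    rw [Measure.map_apply measurable_neg (measurableSet_Iic.inter hS), preimage_inter, hS_neg]
    congr 2
    ext x
    simp
  have hcover : Ici 0 ∩ S ∪ Iic 0 ∩ S = S := by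
    rw [← union_inter_distrib_right, Ici_union_Iic, univ_inter]
  have hoverlap : ρ ((Ici 0 ∩ S) ∩ (Iic 0 ∩ S)) = 0 :=
    measure_mono_null (fun x hx ↦ le_antisymm hx.2.1 hx.1.1) (measure_singleton 0)
  have := measure_union_add_inter (μ := ρ) (Ici 0 ∩ S) ((measurableSet_Iic (a := 0)).inter hS)
  rw [hcover, hoverlap, add_zero, hIic] at this
  rw [two_mul, this]

lemma map_cond_Ici_zero_of_even [IsProbabilityMeasure ρ] (hρ : ρ.map (fun x ↦ -x) = ρ)
    {f : ℝ → ℝ} (hf : Measurable f) (hf_even : ∀ x, f (-x) = f x) :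
    (ρ[|Ici 0]).map f = ρ.map f := by
  ext T hT
  have half : ρ (Ici 0) = 2⁻¹ := by
    have := two_mul_measure_Ici_zero_inter hρ MeasurableSet.univ preimage_univ
    rw [inter_univ, measure_univ] at this
    exact ENNReal.eq_inv_of_mul_eq_one_left (by rwa [mul_comm])
  rw [Measure.map_apply hf hT, Measure.map_apply hf hT, cond_apply measurableSet_Ici, half,
    inv_inv, two_mul_measure_Ici_zero_inter hρ (hf hT) (by ext; simp [hf_even])]

end Symmetric

section Pi

variable {ι : Type*} [Fintype ι] {X : ι → Type*} [∀ i, MeasurableSpace (X i)]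

lemma MeasureTheory.Measure.cond_pi_univ_pi (μ : ∀ i, Measure (X i))
    [∀ i, IsFiniteMeasure (μ i)] {s : ∀ i, Set (X i)} (hs : ∀ i, MeasurableSet (s i)) :
    (Measure.pi μ)[|univ.pi s] = Measure.pi fun i ↦ (μ i)[|s i] := by
  refine (Measure.pi_eq fun t ht ↦ ?_).symm
  rw [cond_apply (.univ_pi hs), ← pi_inter_distrib, Measure.pi_pi, Measure.pi_pi,
    ENNReal.prod_inv_distrib (fun i _ j _ _ ↦ .inr (measure_ne_top _ _)),
    ← Finset.prod_mul_distrib]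
  exact Finset.prod_congr rfl fun i _ ↦ (cond_apply (hs i) _ _).symm

lemma MeasureTheory.Measure.pi_map_restrict (μ : ∀ i, Measure (X i))
    [∀ i, IsProbabilityMeasure (μ i)] (s : Finset ι) :
    (Measure.pi μ).map s.restrict = Measure.pi fun i : s ↦ μ i := by
  classical
  have : s.restrict = Prod.fst ∘ MeasurableEquiv.piEquivPiSubtypeProd X (· ∈ s) := rfl
  rw [this, ← Measure.map_map measurable_fst (MeasurableEquiv.measurable _),
    (measurePreserving_piEquivPiSubtypeProd μ _).map_eq, Measure.map_fst_prod, measure_univ,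
    one_smul]
  -- the two sides differ only in the `Fintype` instance on `s`
  convert rfl

lemma MeasureTheory.Measure.pi_eq_lmarginal_slice [DecidableEq ι] (μ : ∀ i, Measure (X i))
    [∀ i, SigmaFinite (μ i)] (i : ι) {S : Set (∀ i, X i)} (hS : MeasurableSet S)
    (x₀ : ∀ i, X i) :
    Measure.pi μ S
      = (∫⋯∫⁻_(Finset.univ.erase i), (fun x ↦ μ i (Function.update x i ⁻¹' S)) ∂μ) x₀ := by
  rw [← lintegral_indicator_one hS, lintegral_eq_lmarginal_univ x₀,
    lmarginal_erase' _ (measurable_one.indicator hS) (Finset.mem_univ i)]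
  congr with x
  rw [← lintegral_indicator_one (measurable_update x hS)]
  rfl

lemma MeasureTheory.Measure.pi_le_pi_of_slice_le [DecidableEq ι] {μ μ' : ∀ i, Measure (X i)}
    [∀ i, SigmaFinite (μ i)] [∀ i, SigmaFinite (μ' i)] (i : ι) (heq : ∀ j ≠ i, μ j = μ' j)
    {S : Set (∀ i, X i)} (hS : MeasurableSet S)
    (hle : ∀ x, μ i (Function.update x i ⁻¹' S) ≤ μ' i (Function.update x i ⁻¹' S)) :
    Measure.pi μ S ≤ Measure.pi μ' S := by
  rcases isEmpty_or_nonempty (∀ i, X i) with _ | ⟨⟨x₀⟩⟩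
  · simp [eq_empty_of_isEmpty S]
  rw [Measure.pi_eq_lmarginal_slice μ i hS x₀, Measure.pi_eq_lmarginal_slice μ' i hS x₀]
  have hrest :
      (fun j : ↥(Finset.univ.erase i) ↦ μ j) = fun j : ↥(Finset.univ.erase i) ↦ μ' j :=
    funext fun j ↦ heq j (Finset.ne_of_mem_erase j.2)
  simp only [lmarginal, hrest]
  exact lintegral_mono fun y ↦ hle _

end Pi

/-- The factors are replaced one at a time; every slice of the event is a half-line. -/
lemma MeasureTheory.Measure.pi_setOf_lt_sum_le {ι : Type*} [Fintype ι] {ν ν' : ι → Measure ℝ}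
    [∀ i, SigmaFinite (ν i)] [∀ i, SigmaFinite (ν' i)]
    (h : ∀ i c, ν i (Ioi c) ≤ ν' i (Ioi c)) (c : ℝ) :
    Measure.pi ν {x | c < ∑ i, x i} ≤ Measure.pi ν' {x | c < ∑ i, x i} := by
  classical
  have hS : MeasurableSet {x : ι → ℝ | c < ∑ i, x i} :=
    measurableSet_lt measurable_const (by fun_prop)
  let mix (J : Finset ι) (i : ι) : Measure ℝ := if i ∈ J then ν' i else ν i
  have : ∀ J i, SigmaFinite (mix J i) := fun J i ↦ by unfold mix; split_ifs <;> infer_instance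
  suffices ∀ J, Measure.pi ν {x | c < ∑ i, x i} ≤ Measure.pi (mix J) {x | c < ∑ i, x i} by
    simpa [mix] using this Finset.univ
  intro J
  induction J using Finset.induction_on with
  | empty => simp [mix]
  | @insert i J hiJ ih =>
    refine ih.trans <|
      Measure.pi_le_pi_of_slice_le i (fun j hj ↦ by simp [mix, hj]) hS fun x ↦ ?_
    have hslice : Function.update x i ⁻¹' {y | c < ∑ j, y j}
        = Ioi (c - ∑ j ∈ Finset.univ \ {i}, x j) := by
      ext t
      simp [Finset.sum_update_of_mem (Finset.mem_univ i), sub_lt_iff_lt_add]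
    simpa [mix, hslice, hiJ] using h i _

lemma map_pi_gaussianReal_sum_sq_eq_chiSq {ι : Type*} [Fintype ι] {k : ℕ}
    (hk : Fintype.card ι = k) :
    (Measure.pi fun _ : ι ↦ gaussianReal 0 1).map (fun z ↦ ∑ i, z i ^ 2) = chiSq k := by
  let e : ι ≃ Fin k := Fintype.equivFinOfCardEq hk
  rw [chiSq, ← (measurePreserving_piCongrLeft (fun _ : Fin k ↦ gaussianReal 0 1) e).map_eq,
    Measure.map_map (by fun_prop) (MeasurableEquiv.measurable _)]
  congr with z
  exact Fintype.sum_equiv e _ _ fun i ↦ by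
    simp only [MeasurableEquiv.coe_piCongrLeft, Equiv.piCongrLeft_apply_apply]

theorem cond_pi_gaussianReal_setOf_lt_sum_sq_le {ι : Type*} [Fintype ι] {m : ι → ℝ}
    (hm : ∀ i, m i ≤ 0) (q : ℝ) :
    (Measure.pi fun i ↦ gaussianReal (m i) 1)[|univ.pi fun _ ↦ Ici 0] {y | q < ∑ i, y i ^ 2}
      ≤ Measure.pi (fun _ : ι ↦ gaussianReal 0 1) {y | q < ∑ i, y i ^ 2} := by
  have : ∀ i, IsProbabilityMeasure ((gaussianReal (m i) 1)[|Ici 0]) := fun i ↦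
    cond_isProbabilityMeasure (gaussianReal_Ici_ne_zero _ one_ne_zero 0)
  have := nullSingletonClass_gaussianReal (μ := 0) one_ne_zero
  have hsym : (gaussianReal 0 1).map (· ^ 2) = ((gaussianReal 0 1)[|Ici 0]).map (· ^ 2) :=
    (map_cond_Ici_zero_of_even (by simpa using gaussianReal_map_neg (μ := 0) (v := 1))
      (measurable_id.pow_const 2) neg_sq).symm
  have hW : MeasurableSet {w : ι → ℝ | q < ∑ i, w i} :=
    measurableSet_lt measurable_const (by fun_prop)
  have hsq : {y : ι → ℝ | q < ∑ i, y i ^ 2} = (fun y i ↦ y i ^ 2) ⁻¹' {w | q < ∑ i, w i} := rfl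
  rw [hsq, Measure.cond_pi_univ_pi _ fun _ ↦ measurableSet_Ici,
    ← Measure.map_apply (by fun_prop) hW, ← Measure.map_apply (by fun_prop) hW,
    Measure.pi_map_pi (f := fun _ ↦ (· ^ 2)) fun _ ↦ by fun_prop,
    Measure.pi_map_pi (f := fun _ ↦ (· ^ 2)) fun _ ↦ by fun_prop, hsym]
  exact Measure.pi_setOf_lt_sum_le
    (fun i ↦ map_sq_cond_gaussianReal_Ici_zero_Ioi_le (hm i) one_ne_zero) q

theorem stmt13_general (p : ℕ) (μ : Fin p → ℝ) (hμ : ∀ i, μ i ≤ 0)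
    (I : Finset (Fin p)) (k : ℕ) (hk : I.card = k) (α : ℝ)
    (qk : ℝ) (hqk : chiSq k {x | qk < x} = ENNReal.ofReal α) :
    (Measure.pi fun i : Fin p => gaussianReal (μ i) 1)
        {y | (∑ i ∈ I, (y i) ^ 2) > qk ∧ ∀ i ∈ I, 0 ≤ y i} /
      (Measure.pi fun i : Fin p => gaussianReal (μ i) 1) {y | ∀ i ∈ I, 0 ≤ y i} ≤
    ENNReal.ofReal α := by
  have hB : {y : Fin p → ℝ | ∀ i ∈ I, 0 ≤ y i} = I.restrict ⁻¹' univ.pi fun _ ↦ Ici 0 := by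
    ext
    simp only [mem_preimage, mem_univ_pi, mem_Ici, Finset.restrict, Subtype.forall,
      mem_ofPred_eq]
  have hAB : {y : Fin p → ℝ | (∑ i ∈ I, (y i) ^ 2) > qk ∧ ∀ i ∈ I, 0 ≤ y i}
      = I.restrict ⁻¹' ((univ.pi fun _ ↦ Ici 0) ∩ {z | qk < ∑ i, z i ^ 2}) := by
    ext
    simp only [mem_preimage, mem_inter_iff, mem_univ_pi, mem_Ici, Finset.restrict, Subtype.forall,
      mem_ofPred_eq, gt_iff_lt, Finset.sum_coe_sort I fun i ↦ _ ^ 2, and_comm]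
  have hBm : MeasurableSet (univ.pi fun _ : I ↦ Ici (0 : ℝ)) :=
    .univ_pi fun _ ↦ measurableSet_Ici
  have hAm : MeasurableSet {z : I → ℝ | qk < ∑ i, z i ^ 2} :=
    measurableSet_lt measurable_const (by fun_prop)
  rw [hAB, hB, ← Measure.map_apply (by fun_prop) (hBm.inter hAm),
    ← Measure.map_apply (by fun_prop) hBm, Measure.pi_map_restrict, ENNReal.div_eq_inv_mul,
    ← cond_apply hBm, ← hqk, ← map_pi_gaussianReal_sum_sq_eq_chiSq (ι := I) (by simp [hk]),
    Measure.map_apply (by fun_prop) (show MeasurableSet {x : ℝ | qk < x} from measurableSet_Ioi)]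
  exact cond_pi_gaussianReal_setOf_lt_sum_sq_le (m := fun i : I ↦ μ i) (fun i ↦ hμ i) qk

/-- for independent Yᵢ ~ N(μᵢ,1), μᵢ ≤ 0, a subset I of size k ≥ 1
and q_k the (1-α)-quantile of χ²(k), P(∑_{i∈I} Yᵢ² > q_k | Yᵢ ≥ 0 ∀ i ∈ I) ≤ α. -/
theorem stmt13 (p : ℕ) (μ : Fin p → ℝ) (hμ : ∀ i, μ i ≤ 0)
    (I : Finset (Fin p)) (k : ℕ) (hk : I.card = k) (hk1 : 1 ≤ k)
    (α : ℝ) (hα : α ∈ Set.Ioo (0:ℝ) 1)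
    (qk : ℝ) (hqk : chiSq k {x | qk < x} = ENNReal.ofReal α)
    (hpos : 0 < (Measure.pi fun i : Fin p => gaussianReal (μ i) 1)
      {y | ∀ i ∈ I, 0 ≤ y i}) :
    (Measure.pi fun i : Fin p => gaussianReal (μ i) 1)
        {y | (∑ i ∈ I, (y i) ^ 2) > qk ∧ ∀ i ∈ I, 0 ≤ y i} /
      (Measure.pi fun i : Fin p => gaussianReal (μ i) 1) {y | ∀ i ∈ I, 0 ≤ y i} ≤
    ENNReal.ofReal α :=
  stmt13_general p μ hμ I k hk α qk hqk
end

section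
/- Let Y ~ N(μ, I_p) with μ₁ ≤ μ₂ ≤ … ≤ μ_p. Then P(Y₁ ≤ Y₂ ≤ … ≤ Y_p) ≥ 1/p!. -/
/-!
The `p!` sets `{y | y ∘ σ monotone}`, `σ` a permutation, cover `ℝᵖ`, and the one for `σ` has the
probability of `{y monotone}` under the means permuted by `σ`. So it suffices that permuting
monotone means can only decrease this probability: on the cone of monotone `y`, the rearrangement
inequality gives `‖y - μ‖ ≤ ‖y - μ ∘ σ‖`, so the Gaussian density with mean `μ` dominates the one
with mean `μ ∘ σ`.
-/

open MeasureTheory ProbabilityTheory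

open scoped ENNReal NNReal

namespace MeasureTheory

theorem lintegral_fin_nat_prod_eq_prod {n : ℕ} {E : Type*} {mE : MeasurableSpace E}
    {μ : Fin n → Measure E} [∀ i, SigmaFinite (μ i)]
    {f : Fin n → E → ℝ≥0∞} (hf : ∀ i, Measurable (f i)) :
    ∫⁻ x : Fin n → E, ∏ i, f i (x i) ∂(Measure.pi μ) = ∏ i, ∫⁻ x, f i x ∂(μ i) := by
  induction n with
  | zero => simp
  | succ n ih =>
    calc
      _ = ∫⁻ x : E × (Fin n → E), f 0 x.1 * ∏ i : Fin n, f i.succ (x.2 i)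
          ∂((μ 0).prod (Measure.pi fun i ↦ μ i.succ)) := by
        rw [← ((measurePreserving_piFinSuccAbove μ 0).symm).lintegral_comp_emb
          (MeasurableEquiv.measurableEmbedding _)]
        simp only [MeasurableEquiv.piFinSuccAbove_symm_apply, Fin.insertNthEquiv,
          Fin.prod_univ_succ, Fin.insertNth_zero, Equiv.coe_fn_mk, Fin.cons_succ,
          Fin.zero_succAbove, cast_eq, Fin.cons_zero]
      _ = (∫⁻ x, f 0 x ∂μ 0) * ∏ i : Fin n, ∫⁻ x, f i.succ x ∂(μ i.succ) := by
        have hrest : Measurable fun x : Fin n → E ↦ ∏ i : Fin n, f i.succ (x i) :=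
          Finset.measurable_prod _ fun i _ ↦ (hf i.succ).comp (measurable_pi_apply i)
        rw [← ih fun i ↦ hf i.succ, ← lintegral_prod_mul (hf 0).aemeasurable hrest.aemeasurable]
      _ = ∏ i, ∫⁻ x, f i x ∂(μ i) := (Fin.prod_univ_succ fun i ↦ ∫⁻ x, f i x ∂(μ i)).symm

theorem lintegral_fintype_prod_eq_prod {ι E : Type*} [Fintype ι] {mE : MeasurableSpace E}
    {μ : ι → Measure E} [∀ i, SigmaFinite (μ i)]
    {f : ι → E → ℝ≥0∞} (hf : ∀ i, Measurable (f i)) :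
    ∫⁻ x : ι → E, ∏ i, f i (x i) ∂(Measure.pi μ) = ∏ i, ∫⁻ x, f i x ∂(μ i) := by
  let e := (Fintype.equivFin ι).symm
  rw [← (measurePreserving_piCongrLeft _ e).lintegral_comp_emb
    (MeasurableEquiv.measurableEmbedding _)]
  simp_rw [← e.prod_comp, MeasurableEquiv.coe_piCongrLeft, Equiv.piCongrLeft_apply_apply]
  exact lintegral_fin_nat_prod_eq_prod fun i ↦ hf (e i)

theorem Measure.pi_withDensity {ι E : Type*} [Fintype ι] {mE : MeasurableSpace E}
    (μ : ι → Measure E) [∀ i, SigmaFinite (μ i)]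
    {f : ι → E → ℝ≥0∞} (hf : ∀ i, Measurable (f i))
    [∀ i, SigmaFinite ((μ i).withDensity (f i))] :
    Measure.pi (fun i ↦ (μ i).withDensity (f i)) =
      (Measure.pi μ).withDensity fun x ↦ ∏ i, f i (x i) := by
  refine Measure.pi_eq fun s hs ↦ ?_
  rw [withDensity_apply _ (MeasurableSet.univ_pi hs), ← lintegral_indicator (.univ_pi hs)]
  have hind : (Set.univ.pi s).indicator (fun x ↦ ∏ i, f i (x i)) =
      fun x ↦ ∏ i, (s i).indicator (f i) (x i) := by
    ext x
    classical simp [Set.indicator, Finset.prod_ite_zero]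
  rw [hind, lintegral_fintype_prod_eq_prod fun i ↦ (hf i).indicator (hs i)]
  exact Finset.prod_congr rfl fun i _ ↦ by
    rw [lintegral_indicator (hs i), withDensity_apply _ (hs i)]

theorem Measure.pi_preimage_comp_equiv {ι ι' α : Type*} [Fintype ι] [Fintype ι']
    [MeasurableSpace α] (μ : ι → Measure α) [∀ i, SigmaFinite (μ i)] (e : ι' ≃ ι)
    {s : Set (ι' → α)} (hs : MeasurableSet s) :
    Measure.pi μ ((· ∘ e) ⁻¹' s) = Measure.pi (fun i ↦ μ (e i)) s := by
  have := (measurePreserving_piCongrLeft (α := fun _ ↦ α) μ e).symm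
  exact this.measure_preimage hs.nullMeasurableSet

end MeasureTheory

theorem Monovary.sum_sub_sq_le_sum_sub_comp_perm_sq {ι α : Type*} [Fintype ι] [CommRing α]
    [LinearOrder α] [IsStrictOrderedRing α] {f g : ι → α} (hfg : Monovary f g)
    (σ : Equiv.Perm ι) : ∑ i, (f i - g i) ^ 2 ≤ ∑ i, (f i - g (σ i)) ^ 2 := by
  have expand (h : ι → α) :
      ∑ i, (f i - h i) ^ 2 = ∑ i, f i ^ 2 - 2 * ∑ i, f i * h i + ∑ i, h i ^ 2 := by
    simp only [sub_sq, Finset.sum_add_distrib, Finset.sum_sub_distrib, Finset.mul_sum, mul_assoc]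
  rw [expand, expand, Equiv.sum_comp σ (g · ^ 2)]
  linarith [hfg.sum_mul_comp_perm_le_sum_mul (σ := σ)]

theorem Tuple.iUnion_preimage_comp_perm_setOf_monotone {n : ℕ} {α : Type*} [LinearOrder α] :
    ⋃ σ : Equiv.Perm (Fin n), (· ∘ σ) ⁻¹' {x : Fin n → α | Monotone x} = Set.univ :=
  Set.eq_univ_of_forall fun x ↦ Set.mem_iUnion.2 ⟨Tuple.sort x, Tuple.monotone_sort x⟩

namespace ProbabilityTheory

open Real

theorem pi_gaussianReal_eq_withDensity {ι : Type*} [Fintype ι] (m : ι → ℝ) {v : ℝ≥0}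
    (hv : v ≠ 0) : Measure.pi (fun i ↦ gaussianReal (m i) v) =
      volume.withDensity fun x ↦ ∏ i, gaussianPDF (m i) v (x i) := by
  have hdens : (fun i ↦ gaussianReal (m i) v) = fun i ↦ volume.withDensity (gaussianPDF (m i) v) :=
    funext fun i ↦ gaussianReal_of_var_ne_zero _ hv
  have (i : ι) : SigmaFinite (volume.withDensity (gaussianPDF (m i) v)) := by
    rw [← gaussianReal_of_var_ne_zero _ hv]; infer_instance
  rw [hdens]
  exact Measure.pi_withDensity _ fun i ↦ measurable_gaussianPDF _ _

theorem prod_gaussianPDFReal {ι : Type*} [Fintype ι] (m : ι → ℝ) (v : ℝ≥0) (x : ι → ℝ) :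
    ∏ i, gaussianPDFReal (m i) v (x i) =
      (√(2 * π * v))⁻¹ ^ Fintype.card ι * exp (-(∑ i, (x i - m i) ^ 2) / (2 * v)) := by
  simp only [gaussianPDFReal, Finset.prod_mul_distrib, Finset.prod_const, ← exp_sum,
    Finset.card_univ, neg_div, Finset.sum_neg_distrib, Finset.sum_div]

theorem prod_gaussianPDFReal_le_of_sum_sq_le {ι : Type*} [Fintype ι] {m m' x : ι → ℝ}
    (v : ℝ≥0) (h : ∑ i, (x i - m i) ^ 2 ≤ ∑ i, (x i - m' i) ^ 2) :
    ∏ i, gaussianPDFReal (m' i) v (x i) ≤ ∏ i, gaussianPDFReal (m i) v (x i) := by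
  rw [prod_gaussianPDFReal, prod_gaussianPDFReal]
  gcongr

theorem pi_gaussianReal_comp_perm_setOf_monotone_le {ι : Type*} [Fintype ι] [LinearOrder ι]
    {m : ι → ℝ} (hm : Monotone m) {v : ℝ≥0} (hv : v ≠ 0) (σ : Equiv.Perm ι) :
    Measure.pi (fun i ↦ gaussianReal (m (σ i)) v) {x | Monotone x} ≤
      Measure.pi (fun i ↦ gaussianReal (m i) v) {x | Monotone x} := by
  have hmeas : MeasurableSet {x : ι → ℝ | Monotone x} := isClosed_monotone.measurableSet
  rw [pi_gaussianReal_eq_withDensity _ hv, pi_gaussianReal_eq_withDensity _ hv,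
    withDensity_apply _ hmeas, withDensity_apply _ hmeas]
  refine setLIntegral_mono (by fun_prop) fun x hx ↦ ?_
  simp only [gaussianPDF]
  rw [← ENNReal.ofReal_prod_of_nonneg fun i _ ↦ gaussianPDFReal_nonneg _ _ _,
    ← ENNReal.ofReal_prod_of_nonneg fun i _ ↦ gaussianPDFReal_nonneg _ _ _]
  exact ENNReal.ofReal_le_ofReal <| prod_gaussianPDFReal_le_of_sum_sq_le v <|
    (Monotone.monovary hx hm).sum_sub_sq_le_sum_sub_comp_perm_sq σ

end ProbabilityTheory

/-- for Y ~ N(μ, I_p) with μ₁ ≤ ⋯ ≤ μ_p,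
P(Y₁ ≤ ⋯ ≤ Y_p) ≥ 1/p!. -/
theorem stmt16 (p : ℕ) (μ : Fin p → ℝ) (hμ : Monotone μ) :
    ENNReal.ofReal ((1:ℝ) / (Nat.factorial p)) ≤
      (Measure.pi fun i : Fin p => gaussianReal (μ i) 1)
        {y | ∀ i j : Fin p, i ≤ j → y i ≤ y j} := by
  set P := Measure.pi fun i : Fin p => gaussianReal (μ i) 1
  change _ ≤ P {y | Monotone y}
  have hmeas : MeasurableSet {y : Fin p → ℝ | Monotone y} := isClosed_monotone.measurableSet
  have hcover : 1 ≤ (p.factorial : ℝ≥0∞) * P {y | Monotone y} := calc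
    1 = P (⋃ σ : Equiv.Perm (Fin p), (· ∘ σ) ⁻¹' {y | Monotone y}) := by
      rw [Tuple.iUnion_preimage_comp_perm_setOf_monotone, measure_univ]
    _ ≤ ∑ σ : Equiv.Perm (Fin p), P ((· ∘ σ) ⁻¹' {y | Monotone y}) :=
      measure_iUnion_fintype_le _ _
    _ = ∑ σ : Equiv.Perm (Fin p),
        Measure.pi (fun i ↦ gaussianReal (μ (σ i)) 1) {y | Monotone y} := by
      simp_rw [P, Measure.pi_preimage_comp_equiv _ _ hmeas]
    _ ≤ ∑ _σ : Equiv.Perm (Fin p), P {y | Monotone y} :=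
      Finset.sum_le_sum fun σ _ ↦ pi_gaussianReal_comp_perm_setOf_monotone_le hμ one_ne_zero σ
    _ = (p.factorial : ℝ≥0∞) * P {y | Monotone y} := by
      rw [Finset.sum_const, Finset.card_univ, Fintype.card_perm, Fintype.card_fin, nsmul_eq_mul]
  rwa [one_div, ENNReal.ofReal_inv_of_pos (by positivity), ENNReal.ofReal_natCast,
    ENNReal.inv_le_iff_le_mul (by simp) (by simp)]
end
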